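/- arXiv:2305.00511 — 12 statements merged into one kernel-verified Lean document; each statement's English description precedes it below -/
import Mathlib

section
/- A partially ordered metric space (X, d, ≽) has the monotone Lipschitz extension property if and only if it is radial. -/
/-!
Necessity: if `b ⋡ a`, then `dist · b` is increasing and `1`-Lipschitz on `{a, b}`, and any
increasing `1`-Lipschitz extension `F` has `F a - F b = dist a b`. Comparing with a third point `z`
below `b` (resp. with `a` replaced by a point `x` above it) gives conditions (i) and (ii).

Sufficiency: McShane's formula `F x = inf_{s ∈ S} (f s + K c(x, s))`, with the asymmetric cost
`c(x, s) = 0` if `s ≽ x` and `c(x, s) = dist x s` otherwise. Radiality is what makes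
`c(·, s)` `1`-Lipschitz from above and decreasing as `x` goes down, so that `F` is
`K`-Lipschitz and increasing; monotonicity and the Lipschitz bound of `f` give `F = f` on `S`.
-/

open Set

section McShane

variable {X : Type*} [PseudoMetricSpace X] {S : Set X} {K : ℝ} {f : X → ℝ} {c : X → X → ℝ}

noncomputable def mcshaneExtension (S : Set X) (K : ℝ) (f : X → ℝ) (c : X → X → ℝ) (x : X) : ℝ :=
  ⨅ s : S, f s + K * c x s

variable (hK : 0 ≤ K) (hc : ∀ x y s, c x s ≤ c y s + dist x y)
  (hf : ∀ x ∈ S, ∀ s ∈ S, f x ≤ f s + K * c x s)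
include hK hc hf

theorem bddBelow_range_add_mul_cost {s₀ : X} (hs₀ : s₀ ∈ S) (x : X) :
    BddBelow (range fun s : S => f s + K * c x s) := by
  refine ⟨f s₀ - K * dist s₀ x, ?_⟩
  rintro _ ⟨⟨s, hs⟩, rfl⟩
  have hcost : K * c s₀ s ≤ K * c x s + K * dist s₀ x := by
    rw [← mul_add]; exact mul_le_mul_of_nonneg_left (hc s₀ x s) hK
  linarith [hf s₀ hs₀ s hs]

theorem mcshaneExtension_le_add_mul_dist (hS : S.Nonempty) (x y : X) :
    mcshaneExtension S K f c x ≤ mcshaneExtension S K f c y + K * dist x y := by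
  obtain ⟨s₀, hs₀⟩ := hS
  have : Nonempty S := ⟨⟨s₀, hs₀⟩⟩
  rw [← sub_le_iff_le_add]
  refine le_ciInf fun s => ?_
  have hcost : K * c x s ≤ K * c y s + K * dist x y := by
    rw [← mul_add]; exact mul_le_mul_of_nonneg_left (hc x y s) hK
  have := ciInf_le (bddBelow_range_add_mul_cost hK hc hf hs₀ x) s
  simp only [mcshaneExtension] at this ⊢
  linarith

theorem abs_mcshaneExtension_sub_le (hS : S.Nonempty) (x y : X) :
    |mcshaneExtension S K f c x - mcshaneExtension S K f c y| ≤ K * dist x y := by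
  have h₁ := mcshaneExtension_le_add_mul_dist hK hc hf hS x y
  have h₂ := mcshaneExtension_le_add_mul_dist hK hc hf hS y x
  rw [dist_comm] at h₂
  exact abs_sub_le_iff.mpr ⟨by linarith, by linarith⟩

theorem mcshaneExtension_le_of_cost_le {x y : X} (hxy : ∀ s ∈ S, c x s ≤ c y s) :
    mcshaneExtension S K f c x ≤ mcshaneExtension S K f c y := by
  rcases S.eq_empty_or_nonempty with rfl | ⟨s₀, hs₀⟩
  · simp [mcshaneExtension]
  have : Nonempty S := ⟨⟨s₀, hs₀⟩⟩
  refine le_ciInf fun s => (ciInf_le (bddBelow_range_add_mul_cost hK hc hf hs₀ x) s).trans ?_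
  exact add_le_add_right (mul_le_mul_of_nonneg_left (hxy s s.2) hK) _

theorem mcshaneExtension_eq (hself : ∀ x ∈ S, c x x = 0) {x : X} (hx : x ∈ S) :
    mcshaneExtension S K f c x = f x := by
  have : Nonempty S := ⟨⟨x, hx⟩⟩
  refine le_antisymm ?_ (le_ciInf fun s => hf x hx s s.2)
  simpa [mcshaneExtension, hself x hx] using
    ciInf_le (bddBelow_range_add_mul_cost hK hc hf hx x) ⟨x, hx⟩

end McShane

section Radial

variable {X : Type*} [PseudoMetricSpace X] (r : X → X → Prop)

/-- `r x y` stands for `x ≽ y`. -/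
def MonotoneLipschitzExtensionProperty : Prop :=
  ∀ S : Set X, S.Nonempty → ∀ K : ℝ, 0 < K → ∀ f : X → ℝ,
    (∀ x ∈ S, ∀ y ∈ S, r x y → f y ≤ f x) →
    (∀ x ∈ S, ∀ y ∈ S, |f x - f y| ≤ K * dist x y) →
    ∃ F : X → ℝ, (∀ x y, r x y → F y ≤ F x) ∧
      (∀ x y, |F x - F y| ≤ K * dist x y) ∧ ∀ x ∈ S, F x = f x

def IsRadial : Prop :=
  (∀ x y z, ¬ r y x → r y z ∧ y ≠ z → dist x y ≤ dist x z) ∧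
    (∀ x y z, r x y ∧ x ≠ y → ¬ r z y → dist y z ≤ dist x z)

variable {r}

theorem MonotoneLipschitzExtensionProperty.exists_eq_dist {a b : X}
    (h : MonotoneLipschitzExtensionProperty r) (hba : ¬ r b a) :
    ∃ F : X → ℝ, (∀ x y, r x y → F y ≤ F x) ∧ (∀ x y, F x - F y ≤ dist x y) ∧
      F a = dist a b ∧ F b = 0 := by
  have hmono : ∀ x ∈ ({a, b} : Set X), ∀ y ∈ ({a, b} : Set X), r x y → dist y b ≤ dist x b := by
    rintro x (rfl | rfl) y (rfl | rfl) hxy <;> simp_all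
  obtain ⟨F, hFmono, hFlip, hFeq⟩ := h {a, b} (insert_nonempty a {b}) 1 one_pos (dist · b)
    hmono fun x _ y _ => (one_mul (dist x y)).symm ▸ abs_dist_sub_le x y b
  refine ⟨F, hFmono, fun x y => ?_, hFeq a (by simp), by simpa using hFeq b (by simp)⟩
  simpa using (abs_sub_le_iff.mp (hFlip x y)).1

theorem MonotoneLipschitzExtensionProperty.isRadial (h : MonotoneLipschitzExtensionProperty r) :
    IsRadial r := by
  constructor
  · rintro x y z hyx ⟨hyz, -⟩
    obtain ⟨F, hFmono, hFlip, hFx, hFy⟩ := h.exists_eq_dist hyx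
    linarith [hFmono y z hyz, hFlip x z]
  · rintro x y z ⟨hxy, -⟩ hzy
    obtain ⟨F, hFmono, hFlip, hFy, hFz⟩ := h.exists_eq_dist hzy
    linarith [hFmono x y hxy, hFlip x z]

variable (r) in
noncomputable def orderCost (x s : X) : ℝ :=
  open Classical in if r s x then 0 else dist x s

theorem orderCost_nonneg (x s : X) : 0 ≤ orderCost r x s := by
  unfold orderCost; split_ifs <;> simp

theorem orderCost_self (hrefl : ∀ x, r x x) (x : X) : orderCost r x x = 0 := by
  simp [orderCost, hrefl x]

theorem IsRadial.orderCost_le_add_dist (hrad : IsRadial r) (x y s : X) :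
    orderCost r x s ≤ orderCost r y s + dist x y := by
  by_cases hsx : r s x
  · simpa [orderCost, hsx] using add_nonneg (orderCost_nonneg y s) dist_nonneg
  by_cases hsy : r s y
  · rcases eq_or_ne s y with rfl | hne
    · simp [orderCost, hsx, hsy]
    · simpa [orderCost, hsx, hsy] using hrad.1 x s y hsx ⟨hsy, hne⟩
  · simpa [orderCost, hsx, hsy, add_comm] using dist_triangle x y s

theorem IsRadial.orderCost_anti (hrad : IsRadial r) (htrans : ∀ x y z, r x y → r y z → r x z)
    {x y : X} (hxy : r x y) (s : X) : orderCost r y s ≤ orderCost r x s := by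
  by_cases hsy : r s y
  · simpa [orderCost, hsy] using orderCost_nonneg x s
  have hsx : ¬ r s x := fun hsx => hsy (htrans s x y hsx hxy)
  rcases eq_or_ne x y with rfl | hne
  · rfl
  · simpa [orderCost, hsx, hsy] using hrad.2 x y s ⟨hxy, hne⟩ hsy

theorem le_add_mul_orderCost {S : Set X} {K : ℝ} {f : X → ℝ}
    (hmono : ∀ x ∈ S, ∀ y ∈ S, r x y → f y ≤ f x)
    (hlip : ∀ x ∈ S, ∀ y ∈ S, |f x - f y| ≤ K * dist x y) :
    ∀ x ∈ S, ∀ s ∈ S, f x ≤ f s + K * orderCost r x s := by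
  intro x hx s hs
  by_cases hsx : r s x
  · simpa [orderCost, hsx] using hmono s hs x hx hsx
  · simpa [orderCost, hsx, add_comm] using (abs_sub_le_iff.mp (hlip x hx s hs)).1

theorem IsRadial.monotoneLipschitzExtensionProperty (hrad : IsRadial r)
    (hrefl : ∀ x, r x x) (htrans : ∀ x y z, r x y → r y z → r x z) :
    MonotoneLipschitzExtensionProperty r := by
  intro S hS K hK f hmono hlip
  have hc := hrad.orderCost_le_add_dist
  have hf := le_add_mul_orderCost hmono hlip
  exact ⟨mcshaneExtension S K f (orderCost r),
    fun x y hxy => mcshaneExtension_le_of_cost_le hK.le hc hf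
      fun s _ => hrad.orderCost_anti htrans hxy s,
    abs_mcshaneExtension_sub_le hK.le hc hf hS,
    fun x hx => mcshaneExtension_eq hK.le hc hf (fun x _ => orderCost_self hrefl x) hx⟩

end Radial

theorem monotoneLipschitzExtensionProperty_iff_radial_general {X : Type*} [MetricSpace X]
    (r : X → X → Prop)
    (hrefl : ∀ x, r x x)
    (htrans : ∀ x y z, r x y → r y z → r x z) :
    (∀ S : Set X, S.Nonempty → ∀ K : ℝ, 0 < K → ∀ f : X → ℝ,
      (∀ x ∈ S, ∀ y ∈ S, r x y → f y ≤ f x) →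
      (∀ x ∈ S, ∀ y ∈ S, |f x - f y| ≤ K * dist x y) →
      ∃ F : X → ℝ, (∀ x y, r x y → F y ≤ F x) ∧
        (∀ x y, |F x - F y| ≤ K * dist x y) ∧ ∀ x ∈ S, F x = f x) ↔
    ((∀ x y z, ¬ r y x → r y z ∧ y ≠ z → dist x y ≤ dist x z) ∧
      (∀ x y z, r x y ∧ x ≠ y → ¬ r z y → dist y z ≤ dist x z)) :=
  ⟨MonotoneLipschitzExtensionProperty.isRadial,
    fun hrad => IsRadial.monotoneLipschitzExtensionProperty hrad hrefl htrans⟩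

/-- **Theorem 2.** A partially ordered metric space has the monotone Lipschitz
extension property if and only if it is radial. Here `r x y` means `x ≽ y`. -/
theorem monotoneLipschitzExtensionProperty_iff_radial {X : Type*} [MetricSpace X]
    (r : X → X → Prop)
    (hrefl : ∀ x, r x x)
    (htrans : ∀ x y z, r x y → r y z → r x z)
    (hantisymm : ∀ x y, r x y → r y x → x = y) :
    (∀ S : Set X, S.Nonempty → ∀ K : ℝ, 0 < K → ∀ f : X → ℝ,
      (∀ x ∈ S, ∀ y ∈ S, r x y → f y ≤ f x) →
      (∀ x ∈ S, ∀ y ∈ S, |f x - f y| ≤ K * dist x y) →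
      ∃ F : X → ℝ, (∀ x y, r x y → F y ≤ F x) ∧
        (∀ x y, |F x - F y| ≤ K * dist x y) ∧ ∀ x ∈ S, F x = f x) ↔
    ((∀ x y z, ¬ r y x → r y z ∧ y ≠ z → dist x y ≤ dist x z) ∧
      (∀ x y z, r x y ∧ x ≠ y → ¬ r z y → dist y z ≤ dist x z)) :=
  monotoneLipschitzExtensionProperty_iff_radial_general r hrefl htrans
end

section
/- Let (X, d, ≽) be a partially ordered metric space that is not radial. Then there exist a two-point subset S ⊆ X and a ≽-increasing 1-Lipschitz function f : S → ℝ such that no 1-Lipschitz function F : X → ℝ extending f is ≽-increasing. -/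
/-!
The witness is always a pair `a, b` with `¬ b ≽ a`, and `f = dist · b` on `{a, b}`, so
`f a = d(a, b)` and `f b = 0`. An increasing `1`-Lipschitz extension `F` then satisfies
`d(a, b) ≤ d(a, z)` whenever `b ≽ z` (as `F z ≤ F b = 0`) and `d(a, b) ≤ d(x, b)` whenever
`x ≽ a` (as `F a ≤ F x`). A failure of condition (i) of radiality at `x, y, z` contradicts the
first inequality for `(a, b) = (x, y)`, a failure of (ii) the second one for `(a, b) = (y, z)`.
-/

section

variable {X : Type*} [MetricSpace X] (r : X → X → Prop)

theorem increasing_on_pair_dist_right {a b : X} (hba : ¬ r b a) :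
    ∀ x ∈ ({a, b} : Set X), ∀ y ∈ ({a, b} : Set X), r x y → dist y b ≤ dist x b := by
  rintro x (rfl | rfl) y (rfl | rfl) hxy <;> simp_all

variable {r}

theorem dist_le_dist_of_rel_right_of_increasing {F : X → ℝ}
    (hF : ∀ x y, |F x - F y| ≤ dist x y) (hmono : ∀ x y, r x y → F y ≤ F x)
    {a b z : X} (ha : F a = dist a b) (hb : F b = 0) (hbz : r b z) :
    dist a b ≤ dist a z := by
  have hz : F z ≤ 0 := hb ▸ hmono b z hbz
  linarith [(abs_le.mp (hF a z)).2]

theorem dist_le_dist_of_rel_left_of_increasing {F : X → ℝ}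
    (hF : ∀ x y, |F x - F y| ≤ dist x y) (hmono : ∀ x y, r x y → F y ≤ F x)
    {a b x : X} (ha : F a = dist a b) (hb : F b = 0) (hxa : r x a) :
    dist a b ≤ dist x b := by
  have hx : F a ≤ F x := hmono x a hxa
  linarith [(abs_le.mp (hF x b)).2]

end

theorem exists_nonextendable_of_not_radial_general {X : Type*} [MetricSpace X]
    (r : X → X → Prop)
    (hnotradial : ¬ ((∀ x y z, ¬ r y x → r y z ∧ y ≠ z → dist x y ≤ dist x z) ∧
      (∀ x y z, r x y ∧ x ≠ y → ¬ r z y → dist y z ≤ dist x z))) :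
    ∃ a b : X, a ≠ b ∧ ∃ f : X → ℝ,
      (∀ x ∈ ({a, b} : Set X), ∀ y ∈ ({a, b} : Set X), r x y → f y ≤ f x) ∧
      (∀ x ∈ ({a, b} : Set X), ∀ y ∈ ({a, b} : Set X), |f x - f y| ≤ dist x y) ∧
      ∀ F : X → ℝ, (∀ x y, |F x - F y| ≤ dist x y) →
        (∀ x ∈ ({a, b} : Set X), F x = f x) →
        ¬ (∀ x y, r x y → F y ≤ F x) := by
  rcases not_and_or.mp hnotradial with h | h <;> push Not at h
  · obtain ⟨x, y, z, hyx, ⟨hyz, -⟩, hlt⟩ := h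
    refine ⟨x, y, dist_pos.mp (dist_nonneg.trans_lt hlt), (dist · y),
      increasing_on_pair_dist_right r hyx, fun u _ v _ => abs_dist_sub_le u v y,
      fun F hF hext hmono => ?_⟩
    have hb : F y = 0 := (hext y (by simp)).trans (dist_self y)
    exact hlt.not_ge
      (dist_le_dist_of_rel_right_of_increasing hF hmono (hext x (by simp)) hb hyz)
  · obtain ⟨x, y, z, ⟨hxy, -⟩, hzy, hlt⟩ := h
    refine ⟨y, z, dist_pos.mp (dist_nonneg.trans_lt hlt), (dist · z),
      increasing_on_pair_dist_right r hzy, fun u _ v _ => abs_dist_sub_le u v z,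
      fun F hF hext hmono => ?_⟩
    have hb : F z = 0 := (hext z (by simp)).trans (dist_self z)
    exact hlt.not_ge
      (dist_le_dist_of_rel_left_of_increasing hF hmono (hext y (by simp)) hb hxy)

/-- If a partially ordered metric space is not radial, then there is a
two-point set `S = {a, b}` and an order-preserving `1`-Lipschitz function on
`S` none of whose `1`-Lipschitz extensions to `X` is order-preserving.
Here `r x y` means `x ≽ y`. -/
theorem exists_nonextendable_of_not_radial {X : Type*} [MetricSpace X]
    (r : X → X → Prop)
    (hrefl : ∀ x, r x x)
    (htrans : ∀ x y z, r x y → r y z → r x z)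
    (hantisymm : ∀ x y, r x y → r y x → x = y)
    (hnotradial : ¬ ((∀ x y z, ¬ r y x → r y z ∧ y ≠ z → dist x y ≤ dist x z) ∧
      (∀ x y z, r x y ∧ x ≠ y → ¬ r z y → dist y z ≤ dist x z))) :
    ∃ a b : X, a ≠ b ∧ ∃ f : X → ℝ,
      (∀ x ∈ ({a, b} : Set X), ∀ y ∈ ({a, b} : Set X), r x y → f y ≤ f x) ∧
      (∀ x ∈ ({a, b} : Set X), ∀ y ∈ ({a, b} : Set X), |f x - f y| ≤ dist x y) ∧
      ∀ F : X → ℝ, (∀ x y, |F x - F y| ≤ dist x y) →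
        (∀ x ∈ ({a, b} : Set X), F x = f x) →
        ¬ (∀ x y, r x y → F y ≤ F x) :=
  exists_nonextendable_of_not_radial_general r hnotradial
end

section
/- A linearly ordered metric space (X, d, ≽) (i.e., ≽ is a total order on X) has the monotone Lipschitz extension property if and only if it is radially convex. -/
/-!
Radial convexity is exactly what makes, for each `s ∈ S`, the function equal to
`f s + K d(x, s)` on `{x ≽ s}` and to `f s` elsewhere increasing, and (the order being
total) `K`-Lipschitz. Their infimum over `s ∈ S` is an increasing `K`-Lipschitz extension of `f`:
a monotone version of McShane's extension.

Conversely, when `x ≽ y ≽ z`, extending `w ↦ d(w, y)` from `{x, y}` forces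
`d(x, y) ≤ d(x, z)`, and the same argument for the reversed order gives `d(y, z) ≤ d(x, z)`.
-/

open Set

section

variable {X : Type*} [PseudoMetricSpace X] (r : X → X → Prop)

def RadiallyConvex : Prop :=
  ∀ x y z, r x y ∧ x ≠ y → r y z ∧ y ≠ z → max (dist x y) (dist y z) ≤ dist x z

theorem abs_ciInf_sub_ciInf_le {ι : Sort*} [Nonempty ι] {f g : ι → ℝ} {c : ℝ}
    (hf : BddBelow (range f)) (hg : BddBelow (range g)) (h : ∀ i, |f i - g i| ≤ c) :
    |(⨅ i, f i) - ⨅ i, g i| ≤ c := by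
  have key : ∀ {f g : ι → ℝ}, BddBelow (range f) → (∀ i, f i - g i ≤ c) →
      (⨅ i, f i) - ⨅ i, g i ≤ c := fun hf h => sub_le_comm.mp <|
    le_ciInf fun i => (sub_le_sub_right (ciInf_le hf i) c).trans (sub_le_comm.mp (h i))
  rw [abs_sub_le_iff]
  exact ⟨key hf fun i => (abs_sub_le_iff.mp (h i)).1, key hg fun i => (abs_sub_le_iff.mp (h i)).2⟩

variable {r}

namespace MonotoneLipschitzExtensionProperty

theorem swap (h : MonotoneLipschitzExtensionProperty r) :
    MonotoneLipschitzExtensionProperty (Function.swap r) := by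
  intro S hS K hK f hmono hlip
  obtain ⟨F, hFmono, hFlip, hFeq⟩ := h S hS K hK (-f)
    (fun x hx y hy hxy => neg_le_neg (hmono y hy x hx hxy))
    fun x hx y hy => by
      rw [Pi.neg_apply, Pi.neg_apply, neg_sub_neg, abs_sub_comm]
      exact hlip x hx y hy
  refine ⟨-F, fun x y hxy => neg_le_neg (hFmono y x hxy), fun x y => ?_, fun x hx => ?_⟩
  · rw [Pi.neg_apply, Pi.neg_apply, neg_sub_neg, abs_sub_comm]
    exact hFlip x y
  · simp [hFeq x hx]

theorem dist_left_le [Std.Antisymm r] (h : MonotoneLipschitzExtensionProperty r) {x y z : X}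
    (hxy : r x y) (hyz : r y z) : dist x y ≤ dist x z := by
  have hmono : ∀ a ∈ ({x, y} : Set X), ∀ b ∈ ({x, y} : Set X), r a b → dist b y ≤ dist a y := by
    rintro a (rfl | rfl) b (rfl | rfl) hab
    · exact le_rfl
    · simp
    · rw [antisymm hab hxy]
    · exact le_rfl
  obtain ⟨F, hFmono, hFlip, hFeq⟩ := h {x, y} (insert_nonempty x {y}) 1 one_pos (dist · y) hmono
    (fun a _ b _ => by simpa using abs_dist_sub_le a b y)
  have hFx : F x = dist x y := hFeq x (mem_insert x {y})
  have hFy : F y = 0 := by simpa using hFeq y (mem_insert_of_mem x rfl)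
  linarith [hFmono y z hyz, (abs_le.mp (hFlip x z)).2]

theorem radiallyConvex [Std.Antisymm r] (h : MonotoneLipschitzExtensionProperty r) :
    RadiallyConvex r := by
  refine fun x y z hxy hyz => max_le (h.dist_left_le hxy.1 hyz.1) ?_
  simpa only [dist_comm] using h.swap.dist_left_le (x := z) hyz.1 hxy.1

end MonotoneLipschitzExtensionProperty

variable (r) in
open Classical in
noncomputable def upperCone (K : ℝ) (s : X) (c : ℝ) (x : X) : ℝ :=
  if r x s then c + K * dist x s else c

theorem upperCone_self [Std.Refl r] (K : ℝ) (s : X) (c : ℝ) : upperCone r K s c s = c := by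
  simp [upperCone, refl_of r s]

theorem le_upperCone [Std.Total r] {S : Set X} {K : ℝ} {f : X → ℝ}
    (hmono : ∀ x ∈ S, ∀ y ∈ S, r x y → f y ≤ f x)
    (hlip : ∀ x ∈ S, ∀ y ∈ S, |f x - f y| ≤ K * dist x y) {s t : X} (hs : s ∈ S) (ht : t ∈ S) :
    f t ≤ upperCone r K s (f s) t := by
  unfold upperCone
  split_ifs with hts
  · linarith [(abs_le.mp (hlip t ht s hs)).2]
  · exact hmono s hs t ht ((total_of r t s).resolve_left hts)

namespace RadiallyConvex

variable (h : RadiallyConvex r) {K : ℝ} {s x y z : X}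
include h

theorem dist_left_le (hxy : r x y) (hyz : r y z) : dist x y ≤ dist x z := by
  rcases eq_or_ne y z with rfl | hyz'
  · exact le_rfl
  rcases eq_or_ne x y with rfl | hxy'
  · simp
  exact (le_max_left _ _).trans (h x y z ⟨hxy, hxy'⟩ ⟨hyz, hyz'⟩)

theorem dist_right_le (hxy : r x y) (hyz : r y z) : dist y z ≤ dist x z := by
  rcases eq_or_ne x y with rfl | hxy'
  · exact le_rfl
  rcases eq_or_ne y z with rfl | hyz'
  · simp
  exact (le_max_right _ _).trans (h x y z ⟨hxy, hxy'⟩ ⟨hyz, hyz'⟩)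

theorem upperCone_le_upperCone [IsTrans X r] (hK : 0 ≤ K) (c : ℝ) (hxy : r x y) :
    upperCone r K s c y ≤ upperCone r K s c x := by
  unfold upperCone
  by_cases hys : r y s
  · rw [if_pos hys, if_pos (trans_of r hxy hys)]
    gcongr
    exact h.dist_right_le hxy hys
  · rw [if_neg hys]
    split_ifs
    · exact le_add_of_nonneg_right (by positivity)
    · exact le_rfl

theorem abs_upperCone_sub_le [Std.Total r] (hK : 0 ≤ K) (c : ℝ) :
    |upperCone r K s c x - upperCone r K s c y| ≤ K * dist x y := by
  unfold upperCone
  split_ifs with hxs hys hys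
  · rw [add_sub_add_left_eq_sub, ← mul_sub, abs_mul, abs_of_nonneg hK]
    exact mul_le_mul_of_nonneg_left (abs_dist_sub_le x y s) hK
  · rw [add_sub_cancel_left, abs_of_nonneg (by positivity)]
    gcongr
    exact h.dist_left_le hxs ((total_of r y s).resolve_left hys)
  · rw [sub_add_cancel_left, abs_neg, abs_of_nonneg (by positivity), dist_comm x y]
    gcongr
    exact h.dist_left_le hys ((total_of r x s).resolve_left hxs)
  · simpa using mul_nonneg hK dist_nonneg

end RadiallyConvex

theorem RadiallyConvex.monotoneLipschitzExtensionProperty [IsTrans X r] [Std.Total r]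
    (h : RadiallyConvex r) : MonotoneLipschitzExtensionProperty r := by
  intro S ⟨t₀, ht₀⟩ K hK f hmono hlip
  have : Nonempty S := ⟨⟨t₀, ht₀⟩⟩
  set g : S → X → ℝ := fun s => upperCone r K s (f s)
  have hg_lip : ∀ s x y, |g s x - g s y| ≤ K * dist x y := fun _ _ _ =>
    h.abs_upperCone_sub_le hK.le _
  have hg_bdd : ∀ x, BddBelow (range fun s => g s x) := fun x =>
    ⟨f t₀ - K * dist x t₀, by
      rintro _ ⟨s, rfl⟩
      linarith [le_upperCone hmono hlip s.2 ht₀, (abs_le.mp (hg_lip s x t₀)).1]⟩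
  refine ⟨fun x => ⨅ s, g s x,
    fun x y hxy => ciInf_mono (hg_bdd y) fun s => h.upperCone_le_upperCone hK.le _ hxy,
    fun x y => abs_ciInf_sub_ciInf_le (hg_bdd x) (hg_bdd y) fun s => hg_lip s x y,
    fun t ht => le_antisymm ?_ (le_ciInf fun s => le_upperCone hmono hlip s.2 ht)⟩
  exact (ciInf_le (hg_bdd t) ⟨t, ht⟩).trans_eq (upperCone_self K t (f t))

end

theorem monotoneLipschitzExtensionProperty_iff_radiallyConvex_of_total_general
    {X : Type*} [MetricSpace X] (r : X → X → Prop)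
    (htrans : ∀ x y z, r x y → r y z → r x z)
    (hantisymm : ∀ x y, r x y → r y x → x = y)
    (htotal : ∀ x y, r x y ∨ r y x) :
    (∀ S : Set X, S.Nonempty → ∀ K : ℝ, 0 < K → ∀ f : X → ℝ,
      (∀ x ∈ S, ∀ y ∈ S, r x y → f y ≤ f x) →
      (∀ x ∈ S, ∀ y ∈ S, |f x - f y| ≤ K * dist x y) →
      ∃ F : X → ℝ, (∀ x y, r x y → F y ≤ F x) ∧
        (∀ x y, |F x - F y| ≤ K * dist x y) ∧ ∀ x ∈ S, F x = f x) ↔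
    (∀ x y z, r x y ∧ x ≠ y → r y z ∧ y ≠ z →
      max (dist x y) (dist y z) ≤ dist x z) := by
  have : IsTrans X r := ⟨htrans⟩
  have : Std.Antisymm r := ⟨hantisymm⟩
  have : Std.Total r := ⟨htotal⟩
  exact ⟨MonotoneLipschitzExtensionProperty.radiallyConvex,
    RadiallyConvex.monotoneLipschitzExtensionProperty⟩

/-- **Corollary 3.** A linearly ordered metric space has the monotone Lipschitz
extension property if and only if it is radially convex. Here `r x y` means
`x ≽ y` and `r` is a total (linear) order. -/
theorem monotoneLipschitzExtensionProperty_iff_radiallyConvex_of_total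
    {X : Type*} [MetricSpace X] (r : X → X → Prop)
    (hrefl : ∀ x, r x x)
    (htrans : ∀ x y z, r x y → r y z → r x z)
    (hantisymm : ∀ x y, r x y → r y x → x = y)
    (htotal : ∀ x y, r x y ∨ r y x) :
    (∀ S : Set X, S.Nonempty → ∀ K : ℝ, 0 < K → ∀ f : X → ℝ,
      (∀ x ∈ S, ∀ y ∈ S, r x y → f y ≤ f x) →
      (∀ x ∈ S, ∀ y ∈ S, |f x - f y| ≤ K * dist x y) →
      ∃ F : X → ℝ, (∀ x y, r x y → F y ≤ F x) ∧
        (∀ x y, |F x - F y| ≤ K * dist x y) ∧ ∀ x ∈ S, F x = f x) ↔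
    (∀ x y z, r x y ∧ x ≠ y → r y z ∧ y ≠ z →
      max (dist x y) (dist y z) ≤ dist x z) :=
  monotoneLipschitzExtensionProperty_iff_radiallyConvex_of_total_general r htrans hantisymm htotal
end

section
/- Let (X, d, ≽) be a radial partially ordered metric space, T a nonempty set, K ≥ 0, S a nonempty subset of X, and f : S → ℓ∞(T) an order-preserving K-Lipschitz map (where ℓ∞(T) is the Banach space of bounded real-valued functions on T with the supremum norm, partially ordered pointwise). Then there exists an order-preserving K-Lipschitz map F : X → ℓ∞(T) with F restricted to S equal to f. -/
/-!
Put `ρ(x, s) = 0` if `s ≽ x` and `ρ(x, s) = d(x, s)` otherwise, and extend coordinatewise by the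
McShane-type formula `F x t = ⨅ s ∈ S, f s t + K ρ(x, s)`. Radiality is exactly what makes each
`ρ(·, s)` satisfy `ρ(x, s) ≤ ρ(y, s) + d(x, y)` and be antitone for `≽`; the first property makes
`F` `K`-Lipschitz, the second makes it order-preserving, and on `S` the infimum is attained at
`s = x` because `f` is order-preserving and `K`-Lipschitz.
-/

open Set

section McShane

variable {X : Type*} [PseudoMetricSpace X]

noncomputable def mcShaneExtension (ρ : X → X → ℝ) (K : ℝ) (S : Set X) (g : X → ℝ) (x : X) : ℝ :=
  ⨅ s : S, g s + K * ρ x s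

variable {ρ : X → X → ℝ} {K : ℝ} {S : Set X} {g : X → ℝ}

theorem bddBelow_range_add_mul_weight (hK : 0 ≤ K)
    (hρ : ∀ x y s, ρ x s ≤ ρ y s + dist x y)
    (hg : ∀ x ∈ S, ∀ s ∈ S, g x ≤ g s + K * ρ x s) {s₀ : X} (hs₀ : s₀ ∈ S) (x : X) :
    BddBelow (range fun s : S => g s + K * ρ x s) := by
  refine ⟨g s₀ - K * dist s₀ x, ?_⟩
  rintro _ ⟨⟨s, hs⟩, rfl⟩
  have h := mul_le_mul_of_nonneg_left (hρ s₀ x s) hK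
  linarith [hg s₀ hs₀ s hs]

theorem mcShaneExtension_le (hK : 0 ≤ K)
    (hρ : ∀ x y s, ρ x s ≤ ρ y s + dist x y)
    (hg : ∀ x ∈ S, ∀ s ∈ S, g x ≤ g s + K * ρ x s) (x : X) {s : X} (hs : s ∈ S) :
    mcShaneExtension ρ K S g x ≤ g s + K * ρ x s :=
  ciInf_le (bddBelow_range_add_mul_weight hK hρ hg hs x) ⟨s, hs⟩

theorem mcShaneExtension_eq_of_mem (hK : 0 ≤ K)
    (hρ : ∀ x y s, ρ x s ≤ ρ y s + dist x y) (hρ_self : ∀ s ∈ S, ρ s s = 0)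
    (hg : ∀ x ∈ S, ∀ s ∈ S, g x ≤ g s + K * ρ x s) {x : X} (hx : x ∈ S) :
    mcShaneExtension ρ K S g x = g x := by
  have : Nonempty S := ⟨⟨x, hx⟩⟩
  refine le_antisymm ?_ (le_ciInf fun s => hg x hx s s.2)
  simpa [hρ_self x hx] using mcShaneExtension_le hK hρ hg x hx

theorem mcShaneExtension_le_add_dist (hK : 0 ≤ K)
    (hρ : ∀ x y s, ρ x s ≤ ρ y s + dist x y)
    (hg : ∀ x ∈ S, ∀ s ∈ S, g x ≤ g s + K * ρ x s) (hS : S.Nonempty) (x y : X) :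
    mcShaneExtension ρ K S g x ≤ mcShaneExtension ρ K S g y + K * dist x y := by
  have : Nonempty S := hS.to_subtype
  suffices mcShaneExtension ρ K S g x - K * dist x y ≤ mcShaneExtension ρ K S g y by linarith
  refine le_ciInf fun s => ?_
  have h := mul_le_mul_of_nonneg_left (hρ x y s) hK
  linarith [mcShaneExtension_le hK hρ hg x s.2]

theorem abs_mcShaneExtension_sub_le (hK : 0 ≤ K)
    (hρ : ∀ x y s, ρ x s ≤ ρ y s + dist x y)
    (hg : ∀ x ∈ S, ∀ s ∈ S, g x ≤ g s + K * ρ x s) (hS : S.Nonempty) (x y : X) :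
    |mcShaneExtension ρ K S g x - mcShaneExtension ρ K S g y| ≤ K * dist x y := by
  have hxy := mcShaneExtension_le_add_dist hK hρ hg hS x y
  have hyx := mcShaneExtension_le_add_dist hK hρ hg hS y x
  rw [dist_comm] at hyx
  exact abs_sub_le_iff.mpr ⟨by linarith, by linarith⟩

theorem mcShaneExtension_mono_of_weight_le (hK : 0 ≤ K)
    (hρ : ∀ x y s, ρ x s ≤ ρ y s + dist x y)
    (hg : ∀ x ∈ S, ∀ s ∈ S, g x ≤ g s + K * ρ x s) (hS : S.Nonempty) {x y : X}
    (hxy : ∀ s, ρ x s ≤ ρ y s) :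
    mcShaneExtension ρ K S g x ≤ mcShaneExtension ρ K S g y := by
  have : Nonempty S := hS.to_subtype
  refine le_ciInf fun s => ?_
  have h := mul_le_mul_of_nonneg_left (hxy s) hK
  linarith [mcShaneExtension_le hK hρ hg x s.2]

end McShane

section OrderDist

variable {X : Type*} [PseudoMetricSpace X] {r : X → X → Prop}

open Classical in
noncomputable def orderDist (r : X → X → Prop) (x s : X) : ℝ :=
  if r s x then 0 else dist x s

theorem orderDist_self {x : X} (hx : r x x) : orderDist r x x = 0 :=
  if_pos hx

theorem orderDist_le_add_dist
    (hrad1 : ∀ x y z, ¬ r y x → r y z ∧ y ≠ z → dist x y ≤ dist x z) (x y s : X) :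
    orderDist r x s ≤ orderDist r y s + dist x y := by
  unfold orderDist
  by_cases hsx : r s x
  · rw [if_pos hsx]
    split_ifs <;> positivity
  rw [if_neg hsx]
  by_cases hsy : r s y
  · rw [if_pos hsy, zero_add]
    rcases eq_or_ne s y with rfl | hne
    · exact le_rfl
    · exact hrad1 x s y hsx ⟨hsy, hne⟩
  · rw [if_neg hsy]
    linarith [dist_triangle x y s]

theorem orderDist_antitone (htrans : ∀ x y z, r x y → r y z → r x z)
    (hrad2 : ∀ x y z, r x y ∧ x ≠ y → ¬ r z y → dist y z ≤ dist x z)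
    {x y : X} (hxy : r x y) (s : X) :
    orderDist r y s ≤ orderDist r x s := by
  unfold orderDist
  by_cases hsx : r s x
  · rw [if_pos hsx, if_pos (htrans s x y hsx hxy)]
  rw [if_neg hsx]
  by_cases hsy : r s y
  · rw [if_pos hsy]
    exact dist_nonneg
  rw [if_neg hsy]
  rcases eq_or_ne x y with rfl | hne
  · exact le_rfl
  · exact hrad2 x y s ⟨hxy, hne⟩ hsy

theorem le_add_mul_orderDist {K : ℝ} {S : Set X} {g : X → ℝ}
    (hmono : ∀ x ∈ S, ∀ y ∈ S, r x y → g y ≤ g x)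
    (hlip : ∀ x ∈ S, ∀ y ∈ S, |g x - g y| ≤ K * dist x y) :
    ∀ x ∈ S, ∀ s ∈ S, g x ≤ g s + K * orderDist r x s := by
  intro x hx s hs
  unfold orderDist
  split_ifs with hsx
  · linarith [hmono s hs x hx hsx]
  · linarith [le_abs_self (g x - g s), hlip x hx s hs]

end OrderDist

/-- `r x y` encodes `x ≽ y`; an element of `ℓ∞(T)` is a bounded function `T → ℝ`, and the
sup-norm Lipschitz condition is stated pointwise in `t`. -/
theorem exists_monotone_lipschitz_extension_linfty_general {X : Type*} {T : Type*}
    [MetricSpace X] (r : X → X → Prop)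
    (hrefl : ∀ x, r x x)
    (htrans : ∀ x y z, r x y → r y z → r x z)
    (hrad1 : ∀ x y z, ¬ r y x → r y z ∧ y ≠ z → dist x y ≤ dist x z)
    (hrad2 : ∀ x y z, r x y ∧ x ≠ y → ¬ r z y → dist y z ≤ dist x z)
    (K : ℝ) (hK : 0 ≤ K) (S : Set X) (hS : S.Nonempty)
    (f : X → T → ℝ)
    (hbdd : ∀ x ∈ S, ∃ C : ℝ, ∀ t, |f x t| ≤ C)
    (hmono : ∀ x ∈ S, ∀ y ∈ S, r x y → ∀ t, f y t ≤ f x t)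
    (hlip : ∀ x ∈ S, ∀ y ∈ S, ∀ t, |f x t - f y t| ≤ K * dist x y) :
    ∃ F : X → T → ℝ,
      (∀ x, ∃ C : ℝ, ∀ t, |F x t| ≤ C) ∧
      (∀ x y, r x y → ∀ t, F y t ≤ F x t) ∧
      (∀ x y, ∀ t, |F x t - F y t| ≤ K * dist x y) ∧
      ∀ x ∈ S, F x = f x := by
  have hρ := orderDist_le_add_dist hrad1
  have hg (t : T) := le_add_mul_orderDist (K := K) (S := S) (g := fun x => f x t)
    (fun x hx y hy hxy => hmono x hx y hy hxy t) (fun x hx y hy => hlip x hx y hy t)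
  set F : X → T → ℝ := fun x t => mcShaneExtension (orderDist r) K S (fun x => f x t) x
  have hF_lip (x y : X) (t : T) : |F x t - F y t| ≤ K * dist x y :=
    abs_mcShaneExtension_sub_le hK hρ (hg t) hS x y
  have hF_eq (x : X) (hx : x ∈ S) (t : T) : F x t = f x t :=
    mcShaneExtension_eq_of_mem hK hρ (fun s _ => orderDist_self (hrefl s)) (hg t) hx
  refine ⟨F, fun x => ?_, fun x y hxy t => ?_, hF_lip, fun x hx => funext (hF_eq x hx)⟩
  · obtain ⟨s₀, hs₀⟩ := hS
    obtain ⟨C, hC⟩ := hbdd s₀ hs₀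
    refine ⟨C + K * dist x s₀, fun t => ?_⟩
    have h := (abs_sub_abs_le_abs_sub (F x t) (F s₀ t)).trans (hF_lip x s₀ t)
    rw [hF_eq s₀ hs₀ t] at h
    linarith [hC t]
  · exact mcShaneExtension_mono_of_weight_le hK hρ (hg t) hS
      (orderDist_antitone htrans hrad2 hxy)

/-- **Theorem 4.** Order-preserving `K`-Lipschitz maps into `ℓ∞(T)` defined on a
nonempty subset of a radial partially ordered metric space extend to the whole
space. Elements of `ℓ∞(T)` are represented as bounded functions `T → ℝ`,
ordered pointwise; `K`-Lipschitz with respect to the sup norm is expressed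
pointwise (`∀ t, |f x t - f y t| ≤ K * dist x y`, which is equivalent to
`‖f x - f y‖∞ ≤ K * dist x y`). Here `r x y` means `x ≽ y`. -/
theorem exists_monotone_lipschitz_extension_linfty {X : Type*} {T : Type*}
    [MetricSpace X] [Nonempty T] (r : X → X → Prop)
    (hrefl : ∀ x, r x x)
    (htrans : ∀ x y z, r x y → r y z → r x z)
    (hantisymm : ∀ x y, r x y → r y x → x = y)
    (hrad1 : ∀ x y z, ¬ r y x → r y z ∧ y ≠ z → dist x y ≤ dist x z)
    (hrad2 : ∀ x y z, r x y ∧ x ≠ y → ¬ r z y → dist y z ≤ dist x z)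
    (K : ℝ) (hK : 0 ≤ K) (S : Set X) (hS : S.Nonempty)
    (f : X → T → ℝ)
    (hbdd : ∀ x ∈ S, ∃ C : ℝ, ∀ t, |f x t| ≤ C)
    (hmono : ∀ x ∈ S, ∀ y ∈ S, r x y → ∀ t, f y t ≤ f x t)
    (hlip : ∀ x ∈ S, ∀ y ∈ S, ∀ t, |f x t - f y t| ≤ K * dist x y) :
    ∃ F : X → T → ℝ,
      (∀ x, ∃ C : ℝ, ∀ t, |F x t| ≤ C) ∧
      (∀ x y, r x y → ∀ t, F y t ≤ F x t) ∧
      (∀ x y, ∀ t, |F x t - F y t| ≤ K * dist x y) ∧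
      ∀ x ∈ S, F x = f x :=
  exists_monotone_lipschitz_extension_linfty_general r hrefl htrans hrad1 hrad2 K hK S hS f hbdd
    hmono hlip
end

section
/- Let (X, d, ≽) be a radial partially ordered metric space, S a nonempty subset of X, f : S → ℝ a ≽-increasing 1-Lipschitz function, and x ∈ X \ S. Then sup{ f(z) − d(x,z) : z ∈ S } ≤ inf{ f(y) : y ∈ S, y ≽ x } and sup{ f(z) : z ∈ S, x ≽ z } ≤ inf{ f(y) + d(x,y) : y ∈ S } (with the conventions sup ∅ = −∞ and inf ∅ = +∞). -/
/-! Both inequalities are pointwise comparisons between two points of `S`. If the two points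
are comparable, monotonicity of `f` gives the bound outright; if not, radiality bounds their
distance by the distance from one of them to `x`, and the Lipschitz bound finishes. -/

lemma sSup_image_le_sInf_image {α β γ : Type*} [CompleteLattice γ] {g : α → γ} {h : β → γ}
    {A : Set α} {B : Set β} (H : ∀ a ∈ A, ∀ b ∈ B, g a ≤ h b) :
    sSup (g '' A) ≤ sInf (h '' B) :=
  sSup_le <| Set.forall_mem_image.2 fun a ha =>
    le_sInf <| Set.forall_mem_image.2 fun b hb => H a ha b hb

section Radial

variable {X : Type*} [PseudoMetricSpace X] {r : X → X → Prop} {S : Set X} {f : X → ℝ}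

lemma sub_dist_le_of_radial
    (hrad1 : ∀ x y z, ¬ r y x → r y z ∧ y ≠ z → dist x y ≤ dist x z)
    (hmono : ∀ x ∈ S, ∀ y ∈ S, r x y → f y ≤ f x)
    (hlip : ∀ x ∈ S, ∀ y ∈ S, |f x - f y| ≤ dist x y)
    {x y z : X} (hz : z ∈ S) (hy : y ∈ S) (hyx : r y x) (hne : y ≠ x) :
    f z - dist x z ≤ f y := by
  by_cases hyz : r y z
  · linarith [hmono y hy z hz hyz, dist_nonneg (x := x) (y := z)]
  · calc f z - dist x z ≤ f z - dist z y := by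
          rw [dist_comm x z]; linarith [hrad1 z y x hyz ⟨hyx, hne⟩]
      _ ≤ f y := by linarith [le_of_abs_le (hlip z hz y hy)]

lemma le_add_dist_of_radial
    (hrad2 : ∀ x y z, r x y ∧ x ≠ y → ¬ r z y → dist y z ≤ dist x z)
    (hmono : ∀ x ∈ S, ∀ y ∈ S, r x y → f y ≤ f x)
    (hlip : ∀ x ∈ S, ∀ y ∈ S, |f x - f y| ≤ dist x y)
    {x y z : X} (hz : z ∈ S) (hy : y ∈ S) (hxz : r x z) (hne : x ≠ z) :
    f z ≤ f y + dist x y := by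
  by_cases hyz : r y z
  · linarith [hmono y hy z hz hyz, dist_nonneg (x := x) (y := y)]
  · calc f z ≤ f y + dist z y := by linarith [le_of_abs_le (hlip z hz y hy)]
      _ ≤ f y + dist x y := by linarith [hrad2 x z y ⟨hxz, hne⟩ hyz]

end Radial

/-- Here `r x y` encodes `x ≽ y`; working in `EReal` gives `sSup ∅ = ⊥` and `sInf ∅ = ⊤`. -/
theorem mcshane_whitney_order_bounds_general {X : Type*} [MetricSpace X]
    (r : X → X → Prop)
    (hrad1 : ∀ x y z, ¬ r y x → r y z ∧ y ≠ z → dist x y ≤ dist x z)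
    (hrad2 : ∀ x y z, r x y ∧ x ≠ y → ¬ r z y → dist y z ≤ dist x z)
    (S : Set X) (f : X → ℝ)
    (hmono : ∀ x ∈ S, ∀ y ∈ S, r x y → f y ≤ f x)
    (hlip : ∀ x ∈ S, ∀ y ∈ S, |f x - f y| ≤ dist x y)
    (x : X) (hx : x ∉ S) :
    sSup ((fun z => ((f z - dist x z : ℝ) : EReal)) '' S) ≤
      sInf ((fun y => ((f y : ℝ) : EReal)) '' {y ∈ S | r y x}) ∧
    sSup ((fun z => ((f z : ℝ) : EReal)) '' {z ∈ S | r x z}) ≤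
      sInf ((fun y => ((f y + dist x y : ℝ) : EReal)) '' S) := by
  constructor
  · refine sSup_image_le_sInf_image fun z hz y ⟨hy, hyx⟩ => EReal.coe_le_coe_iff.2 ?_
    exact sub_dist_le_of_radial hrad1 hmono hlip hz hy hyx (ne_of_mem_of_not_mem hy hx)
  · refine sSup_image_le_sInf_image fun z ⟨hz, hxz⟩ y hy => EReal.coe_le_coe_iff.2 ?_
    exact le_add_dist_of_radial hrad2 hmono hlip hz hy hxz (ne_of_mem_of_not_mem hz hx).symm

/-- The key inequalities in the proof of Theorem 4 (scalar case): for a radial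
partially ordered metric space, a nonempty `S ⊆ X`, an `≽`-increasing
`1`-Lipschitz `f : S → ℝ` and `x ∈ X \ S`, the McShane extension value at `x`
is below `inf {f y : y ∈ S, y ≽ x}` and `sup {f z : z ∈ S, x ≽ z}` is below the
Whitney extension value at `x`. Suprema and infima are taken in the extended
reals `EReal`, so that `sup ∅ = ⊥ = -∞` and `inf ∅ = ⊤ = +∞`.
Here `r x y` means `x ≽ y`. -/
theorem mcshane_whitney_order_bounds {X : Type*} [MetricSpace X]
    (r : X → X → Prop)
    (hrefl : ∀ x, r x x)
    (htrans : ∀ x y z, r x y → r y z → r x z)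
    (hantisymm : ∀ x y, r x y → r y x → x = y)
    (hrad1 : ∀ x y z, ¬ r y x → r y z ∧ y ≠ z → dist x y ≤ dist x z)
    (hrad2 : ∀ x y z, r x y ∧ x ≠ y → ¬ r z y → dist y z ≤ dist x z)
    (S : Set X) (hS : S.Nonempty) (f : X → ℝ)
    (hmono : ∀ x ∈ S, ∀ y ∈ S, r x y → f y ≤ f x)
    (hlip : ∀ x ∈ S, ∀ y ∈ S, |f x - f y| ≤ dist x y)
    (x : X) (hx : x ∉ S) :
    sSup ((fun z => ((f z - dist x z : ℝ) : EReal)) '' S) ≤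
      sInf ((fun y => ((f y : ℝ) : EReal)) '' {y ∈ S | r y x}) ∧
    sSup ((fun z => ((f z : ℝ) : EReal)) '' {z ∈ S | r x z}) ≤
      sInf ((fun y => ((f y + dist x y : ℝ) : EReal)) '' S) :=
  mcshane_whitney_order_bounds_general r hrad1 hrad2 S f hmono hlip x hx
end

section
/- Let (X, d, ≽) be a radial partially ordered metric space. Then there exists a family 𝓕 of ≽-increasing 1-Lipschitz functions from X to ℝ that represents ≽, i.e., for all x,y ∈ X, x ≽ y holds if and only if F(x) ≥ F(y) for every F ∈ 𝓕. -/
/-!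
For a point `p`, the map `w ↦ d(p, ↑w)`, where `↑w = {z | z ≽ w}`, is `≽`-increasing because
`↑x ⊆ ↑y` when `x ≽ y`. The first radial condition makes it `1`-Lipschitz: a point `z ≽ b`
with `z ⋡ a` is at least as close to `a` as `b` is. The second radial condition gives
`d(x, ↑y) ≥ d(x, y)` whenever `x ⋡ y`, while `d(x, ↑x) = 0`, so taking `p = x` detects
every pair with `x ⋡ y`.
-/

open Metric

namespace RadialOrder

variable {X : Type*} [MetricSpace X] {r : X → X → Prop}

variable (r) in
noncomputable def infDistUpper (p w : X) : ℝ :=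
  infDist p {z | r z w}

lemma infDistUpper_le_dist {p w z : X} (hzw : r z w) : infDistUpper r p w ≤ dist p z :=
  infDist_le_dist_of_mem (s := {z | r z w}) hzw

lemma le_infDistUpper_iff (hrefl : ∀ x, r x x) {p w : X} {c : ℝ} :
    c ≤ infDistUpper r p w ↔ ∀ z, r z w → c ≤ dist p z :=
  le_infDist (s := {z | r z w}) ⟨w, hrefl w⟩

lemma infDistUpper_self (hrefl : ∀ x, r x x) (x : X) : infDistUpper r x x = 0 :=
  infDist_zero_of_mem (hrefl x)

lemma infDistUpper_le_of_rel (hrefl : ∀ x, r x x)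
    (htrans : ∀ x y z, r x y → r y z → r x z) (p : X) {x y : X} (hxy : r x y) :
    infDistUpper r p y ≤ infDistUpper r p x :=
  infDist_le_infDist_of_subset (fun z hz => htrans z x y hz hxy) ⟨x, hrefl x⟩

lemma dist_le_dist_of_not_rel_of_rel
    (hrad1 : ∀ x y z, ¬ r y x → r y z ∧ y ≠ z → dist x y ≤ dist x z)
    {a b z : X} (hza : ¬ r z a) (hzb : r z b) : dist a z ≤ dist a b := by
  rcases eq_or_ne z b with rfl | hne
  · exact le_rfl
  · exact hrad1 a z b hza ⟨hzb, hne⟩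

lemma dist_le_dist_of_rel_of_not_rel
    (hrad2 : ∀ x y z, r x y ∧ x ≠ y → ¬ r z y → dist y z ≤ dist x z)
    {x y z : X} (hzy : r z y) (hxy : ¬ r x y) : dist y x ≤ dist z x := by
  rcases eq_or_ne z y with rfl | hne
  · exact le_rfl
  · exact hrad2 z y x ⟨hzy, hne⟩ hxy

lemma infDistUpper_le_add_dist (hrefl : ∀ x, r x x)
    (hrad1 : ∀ x y z, ¬ r y x → r y z ∧ y ≠ z → dist x y ≤ dist x z) (p a b : X) :
    infDistUpper r p a ≤ infDistUpper r p b + dist a b := by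
  rw [← sub_le_iff_le_add, le_infDistUpper_iff hrefl]
  intro z hzb
  by_cases hza : r z a
  · linarith [infDistUpper_le_dist (p := p) hza, dist_nonneg (x := a) (y := b)]
  · have hclose := dist_le_dist_of_not_rel_of_rel hrad1 hza hzb
    calc infDistUpper r p a - dist a b ≤ dist p a - dist a z := by
          linarith [infDistUpper_le_dist (p := p) (hrefl a)]
      _ ≤ dist p z := by linarith [dist_triangle p z a, dist_comm z a]

lemma lipschitzWith_infDistUpper (hrefl : ∀ x, r x x)
    (hrad1 : ∀ x y z, ¬ r y x → r y z ∧ y ≠ z → dist x y ≤ dist x z) (p : X) :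
    LipschitzWith 1 (infDistUpper r p) :=
  LipschitzWith.of_le_add (infDistUpper_le_add_dist hrefl hrad1 p)

lemma dist_le_infDistUpper_of_not_rel (hrefl : ∀ x, r x x)
    (hrad2 : ∀ x y z, r x y ∧ x ≠ y → ¬ r z y → dist y z ≤ dist x z)
    {x y : X} (hxy : ¬ r x y) : dist x y ≤ infDistUpper r x y := by
  refine (le_infDistUpper_iff hrefl).2 fun z hzy => ?_
  rw [dist_comm x y, dist_comm x z]
  exact dist_le_dist_of_rel_of_not_rel hrad2 hzy hxy

lemma infDistUpper_self_lt_of_not_rel (hrefl : ∀ x, r x x)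
    (hrad2 : ∀ x y z, r x y ∧ x ≠ y → ¬ r z y → dist y z ≤ dist x z)
    {x y : X} (hxy : ¬ r x y) : infDistUpper r x x < infDistUpper r x y := by
  have hne : x ≠ y := fun h => hxy (h ▸ hrefl x)
  rw [infDistUpper_self hrefl]
  exact (dist_pos.2 hne).trans_le (dist_le_infDistUpper_of_not_rel hrefl hrad2 hxy)

end RadialOrder

open RadialOrder

theorem exists_lipschitz_family_representing_radial_order_general
    {X : Type*} [MetricSpace X] (r : X → X → Prop)
    (hrefl : ∀ x, r x x)
    (htrans : ∀ x y z, r x y → r y z → r x z)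
    (hrad1 : ∀ x y z, ¬ r y x → r y z ∧ y ≠ z → dist x y ≤ dist x z)
    (hrad2 : ∀ x y z, r x y ∧ x ≠ y → ¬ r z y → dist y z ≤ dist x z) :
    ∃ 𝓕 : Set (X → ℝ),
      (∀ F ∈ 𝓕, ∀ x y, r x y → F y ≤ F x) ∧
      (∀ F ∈ 𝓕, ∀ x y, |F x - F y| ≤ dist x y) ∧
      ∀ x y, r x y ↔ ∀ F ∈ 𝓕, F y ≤ F x := by
  have hmono : ∀ F ∈ Set.range (infDistUpper r), ∀ x y, r x y → F y ≤ F x := by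
    rintro _ ⟨p, rfl⟩ x y hxy
    exact infDistUpper_le_of_rel hrefl htrans p hxy
  refine ⟨Set.range (infDistUpper r), hmono, ?_,
    fun x y => ⟨fun hxy F hF => hmono F hF x y hxy, ?_⟩⟩
  · rintro _ ⟨p, rfl⟩ a b
    simpa [← Real.dist_eq] using (lipschitzWith_infDistUpper hrefl hrad1 p).dist_le_mul a b
  · intro h
    by_contra hxy
    exact (h _ ⟨x, rfl⟩).not_gt (infDistUpper_self_lt_of_not_rel hrefl hrad2 hxy)

/-- **Proposition 5** (first part). Every radial partial order on a metric
space is represented by a family of `≽`-increasing `1`-Lipschitz real-valued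
functions. Here `r x y` means `x ≽ y`. -/
theorem exists_lipschitz_family_representing_radial_order
    {X : Type*} [MetricSpace X] (r : X → X → Prop)
    (hrefl : ∀ x, r x x)
    (htrans : ∀ x y z, r x y → r y z → r x z)
    (hantisymm : ∀ x y, r x y → r y x → x = y)
    (hrad1 : ∀ x y z, ¬ r y x → r y z ∧ y ≠ z → dist x y ≤ dist x z)
    (hrad2 : ∀ x y z, r x y ∧ x ≠ y → ¬ r z y → dist y z ≤ dist x z) :
    ∃ 𝓕 : Set (X → ℝ),
      (∀ F ∈ 𝓕, ∀ x y, r x y → F y ≤ F x) ∧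
      (∀ F ∈ 𝓕, ∀ x y, |F x - F y| ≤ dist x y) ∧
      ∀ x y, r x y ↔ ∀ F ∈ 𝓕, F y ≤ F x :=
  exists_lipschitz_family_representing_radial_order_general r hrefl htrans hrad1 hrad2
end

section
/- Let (X, d, ≽) be a radial partially ordered metric space with (X,d) compact. Then there exists a family 𝓕 of ≽-increasing 1-Lipschitz functions from X to ℝ that represents ≽, such that 𝓕 is compact as a subset of the space of bounded continuous real functions on X with the uniform (supremum) metric and sup_{F ∈ 𝓕} ‖F‖∞ ≤ diam(X). -/
/-!
The family is `z ↦ infDist · {w | z ≽ w}`, the distance to the lower set of `z`. Condition (ii)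
of radiality makes these functions `≽`-increasing and makes `z ↦ infDist x {w | z ≽ w}`
`1`-Lipschitz, so the family is a continuous image of the compact space `X`; condition (i)
says that a point `y` with `x ⋡ y` is at distance `d(y, x) > 0` from the lower set of `x`,
which separates `y` from `x`.
-/

open Metric

theorem Metric.infDist_le_infDist_of_forall_dist_le {X : Type*} [PseudoMetricSpace X]
    {s : Set X} {x y : X} (h : ∀ w ∈ s, dist y w ≤ dist x w) : infDist y s ≤ infDist x s := by
  rcases s.eq_empty_or_nonempty with rfl | hs
  · simp
  · exact (le_infDist hs).2 fun w hw => (infDist_le_dist_of_mem hw).trans (h w hw)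

namespace RadialOrder

variable {X : Type*} [MetricSpace X] {r : X → X → Prop}

theorem infDist_lowerSet_le_of_rel
    (htrans : ∀ x y z, r x y → r y z → r x z)
    (hrad2 : ∀ x y z, r x y ∧ x ≠ y → ¬ r z y → dist y z ≤ dist x z)
    {x y : X} (hxy : r x y) (z : X) :
    infDist y {w | r z w} ≤ infDist x {w | r z w} := by
  by_cases hzy : r z y
  · rw [infDist_zero_of_mem (s := {w | r z w}) hzy]
    exact infDist_nonneg
  rcases eq_or_ne x y with rfl | hne
  · exact le_rfl
  exact infDist_le_infDist_of_forall_dist_le fun w hzw =>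
    hrad2 x y w ⟨hxy, hne⟩ fun hwy => hzy (htrans z w y hzw hwy)

theorem dist_le_infDist_lowerSet_of_not_rel
    (hrefl : ∀ x, r x x)
    (hrad1 : ∀ x y z, ¬ r y x → r y z ∧ y ≠ z → dist x y ≤ dist x z)
    {x y : X} (hxy : ¬ r x y) :
    dist y x ≤ infDist y {w | r x w} := by
  refine (le_infDist ⟨x, hrefl x⟩).2 fun w hxw => ?_
  rcases eq_or_ne x w with rfl | hne
  · exact le_rfl
  · exact hrad1 y x w hxy ⟨hxw, hne⟩

theorem rel_iff_forall_infDist_lowerSet_le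
    (hrefl : ∀ x, r x x)
    (htrans : ∀ x y z, r x y → r y z → r x z)
    (hrad1 : ∀ x y z, ¬ r y x → r y z ∧ y ≠ z → dist x y ≤ dist x z)
    (hrad2 : ∀ x y z, r x y ∧ x ≠ y → ¬ r z y → dist y z ≤ dist x z)
    (x y : X) :
    r x y ↔ ∀ z, infDist y {w | r z w} ≤ infDist x {w | r z w} := by
  refine ⟨fun hxy => infDist_lowerSet_le_of_rel htrans hrad2 hxy, fun h => ?_⟩
  by_contra hxy
  have hyx : 0 < dist y x := dist_pos.2 fun hyx => hxy (hyx ▸ hrefl x)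
  have hsep := dist_le_infDist_lowerSet_of_not_rel hrefl hrad1 hxy
  have hle := h x
  rw [infDist_zero_of_mem (s := {w | r x w}) (hrefl x)] at hle
  linarith

theorem lipschitzWith_one_infDist_lowerSet
    (hrefl : ∀ x, r x x)
    (hrad2 : ∀ x y z, r x y ∧ x ≠ y → ¬ r z y → dist y z ≤ dist x z)
    (x : X) :
    LipschitzWith 1 fun z => infDist x {w | r z w} := by
  refine LipschitzWith.of_le_add fun z z' => ?_
  suffices ∀ w, r z' w → infDist x {w | r z w} - dist z z' ≤ dist x w by
    have := (le_infDist (x := x) (s := {w | r z' w}) ⟨z', hrefl z'⟩).2 this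
    linarith
  intro w hz'w
  by_cases hzw : r z w
  · have := infDist_le_dist_of_mem (x := x) (s := {w | r z w}) hzw
    linarith [dist_nonneg (x := z) (y := z')]
  have hwz : dist w z ≤ dist z z' := by
    rw [dist_comm z]
    rcases eq_or_ne z' w with rfl | hne
    · exact le_rfl
    · exact hrad2 z' w z ⟨hz'w, hne⟩ hzw
  have := infDist_le_dist_of_mem (x := x) (s := {w | r z w}) (hrefl z)
  linarith [dist_triangle x w z]

variable [CompactSpace X]

variable (r) in
noncomputable def infDistLowerSet (z : X) : BoundedContinuousFunction X ℝ :=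
  .mkOfCompact ⟨fun x => infDist x {w | r z w}, continuous_infDist_pt _⟩

theorem infDistLowerSet_apply (z x : X) : infDistLowerSet r z x = infDist x {w | r z w} :=
  rfl

theorem lipschitzWith_one_infDistLowerSet
    (hrefl : ∀ x, r x x)
    (hrad2 : ∀ x y z, r x y ∧ x ≠ y → ¬ r z y → dist y z ≤ dist x z) :
    LipschitzWith 1 (infDistLowerSet r) := by
  refine LipschitzWith.of_dist_le_mul fun z z' => ?_
  rw [NNReal.coe_one, one_mul, BoundedContinuousFunction.dist_le dist_nonneg]
  intro x
  have := (lipschitzWith_one_infDist_lowerSet hrefl hrad2 x).dist_le_mul z z'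
  rwa [NNReal.coe_one, one_mul] at this

theorem norm_infDistLowerSet_le_diam (hrefl : ∀ x, r x x) (z : X) :
    ‖infDistLowerSet r z‖ ≤ diam (Set.univ : Set X) := by
  refine (BoundedContinuousFunction.norm_le diam_nonneg).2 fun x => ?_
  rw [infDistLowerSet_apply, Real.norm_of_nonneg infDist_nonneg]
  exact (infDist_le_dist_of_mem (hrefl z)).trans
    (dist_le_diam_of_mem isCompact_univ.isBounded trivial trivial)

end RadialOrder

open RadialOrder in
theorem exists_compact_lipschitz_family_representing_radial_order_general
    {X : Type*} [MetricSpace X] [CompactSpace X] (r : X → X → Prop)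
    (hrefl : ∀ x, r x x)
    (htrans : ∀ x y z, r x y → r y z → r x z)
    (hrad1 : ∀ x y z, ¬ r y x → r y z ∧ y ≠ z → dist x y ≤ dist x z)
    (hrad2 : ∀ x y z, r x y ∧ x ≠ y → ¬ r z y → dist y z ≤ dist x z) :
    ∃ 𝓕 : Set (BoundedContinuousFunction X ℝ),
      IsCompact 𝓕 ∧
      (∀ F ∈ 𝓕, ∀ x y, r x y → F y ≤ F x) ∧
      (∀ F ∈ 𝓕, ∀ x y, |F x - F y| ≤ dist x y) ∧
      (∀ F ∈ 𝓕, ‖F‖ ≤ Metric.diam (Set.univ : Set X)) ∧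
      ∀ x y, r x y ↔ ∀ F ∈ 𝓕, F y ≤ F x := by
  refine ⟨Set.range (infDistLowerSet r),
    isCompact_range (lipschitzWith_one_infDistLowerSet hrefl hrad2).continuous, ?_, ?_, ?_, ?_⟩
  · rintro _ ⟨z, rfl⟩ x y hxy
    exact infDist_lowerSet_le_of_rel htrans hrad2 hxy z
  · rintro _ ⟨z, rfl⟩ x y
    have := (lipschitz_infDist_pt {w | r z w}).dist_le_mul x y
    rwa [NNReal.coe_one, one_mul, Real.dist_eq] at this
  · rintro _ ⟨z, rfl⟩
    exact norm_infDistLowerSet_le_diam hrefl z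
  · intro x y
    simpa only [Set.forall_mem_range, infDistLowerSet_apply] using
      rel_iff_forall_infDist_lowerSet_le hrefl htrans hrad1 hrad2 x y

/-- **Proposition 5** (second part). On a compact metric space, a radial
partial order is represented by a compact family `𝓕` of `≽`-increasing
`1`-Lipschitz functions (a compact subset of the space `BoundedContinuousFunction X ℝ` of bounded
continuous functions with the sup metric) with `sup_{F ∈ 𝓕} ‖F‖∞ ≤ diam X`.
Here `r x y` means `x ≽ y`. -/
theorem exists_compact_lipschitz_family_representing_radial_order
    {X : Type*} [MetricSpace X] [CompactSpace X] (r : X → X → Prop)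
    (hrefl : ∀ x, r x x)
    (htrans : ∀ x y z, r x y → r y z → r x z)
    (hantisymm : ∀ x y, r x y → r y x → x = y)
    (hrad1 : ∀ x y z, ¬ r y x → r y z ∧ y ≠ z → dist x y ≤ dist x z)
    (hrad2 : ∀ x y z, r x y ∧ x ≠ y → ¬ r z y → dist y z ≤ dist x z) :
    ∃ 𝓕 : Set (BoundedContinuousFunction X ℝ),
      IsCompact 𝓕 ∧
      (∀ F ∈ 𝓕, ∀ x y, r x y → F y ≤ F x) ∧
      (∀ F ∈ 𝓕, ∀ x y, |F x - F y| ≤ dist x y) ∧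
      (∀ F ∈ 𝓕, ‖F‖ ≤ Metric.diam (Set.univ : Set X)) ∧
      ∀ x y, r x y ↔ ∀ F ∈ 𝓕, F y ≤ F x :=
  exists_compact_lipschitz_family_representing_radial_order_general r hrefl htrans hrad1 hrad2
end

section
/- Every radial partial order ≽ on a metric space (X,d) is a closed subset of X × X (with the product topology), i.e., the set {(x,y) ∈ X × X : x ≽ y} is closed. -/
/-!
Write `r x y` for `x ≽ y`. If `x ⋡ y` and `x' ≽ y'`, then `d(x, y) ≤ d(x', x) + d(y', y)`:
either `x ≽ y'`, and the first radial axiom gives `d(y, x) ≤ d(y, y')`, or `x ⋡ y'`, and the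
second gives `d(y', x) ≤ d(x', x)`, which the triangle inequality through `y'` turns into the
bound. Since `≽` is reflexive, `x ⋡ y` forces `x ≠ y`, so the ball of radius `d(x, y) / 2`
around `(x, y)` in `X × X` misses `≽`.
-/

theorem dist_le_dist_add_dist_of_not_rel {X : Type*} [MetricSpace X] {r : X → X → Prop}
    (hrad1 : ∀ x y z, ¬ r y x → r y z ∧ y ≠ z → dist x y ≤ dist x z)
    (hrad2 : ∀ x y z, r x y ∧ x ≠ y → ¬ r z y → dist y z ≤ dist x z)
    {x y x' y' : X} (hxy : ¬ r x y) (hxy' : r x' y') :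
    dist x y ≤ dist x' x + dist y' y := by
  by_cases hxy'' : r x y'
  · have hy : dist y x ≤ dist y y' := by
      rcases eq_or_ne x y' with rfl | hne
      · exact le_rfl
      · exact hrad1 y x y' hxy ⟨hxy'', hne⟩
    rw [dist_comm x y, dist_comm y' y]
    linarith [dist_nonneg (x := x') (y := x)]
  · have hy' : dist y' x ≤ dist x' x := by
      rcases eq_or_ne x' y' with rfl | hne
      · exact le_rfl
      · exact hrad2 x' y' x ⟨hxy', hne⟩ hxy''
    calc dist x y ≤ dist y' x + dist y' y := dist_triangle_left x y y'
      _ ≤ dist x' x + dist y' y := by linarith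

theorem radial_partialOrder_isClosed_general {X : Type*} [MetricSpace X]
    (r : X → X → Prop)
    (hrefl : ∀ x, r x x)
    (hrad1 : ∀ x y z, ¬ r y x → r y z ∧ y ≠ z → dist x y ≤ dist x z)
    (hrad2 : ∀ x y z, r x y ∧ x ≠ y → ¬ r z y → dist y z ≤ dist x z) :
    IsClosed {p : X × X | r p.1 p.2} := by
  rw [← isOpen_compl_iff, Metric.isOpen_iff]
  rintro ⟨x, y⟩ hxy
  have hpos : 0 < dist x y := dist_pos.2 fun h => hxy (h ▸ hrefl x)
  refine ⟨dist x y / 2, half_pos hpos, ?_⟩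
  rintro ⟨x', y'⟩ hball hxy'
  have hle := dist_le_dist_add_dist_of_not_rel hrad1 hrad2 hxy hxy'
  rw [Metric.mem_ball, Prod.dist_eq, max_lt_iff] at hball
  linarith [hball.1, hball.2]

/-- **Corollary 6.** Every radial partial order on a metric space is a closed
subset of `X × X`. Here `r x y` means `x ≽ y`. -/
theorem radial_partialOrder_isClosed {X : Type*} [MetricSpace X]
    (r : X → X → Prop)
    (hrefl : ∀ x, r x x)
    (htrans : ∀ x y z, r x y → r y z → r x z)
    (hantisymm : ∀ x y, r x y → r y x → x = y)
    (hrad1 : ∀ x y z, ¬ r y x → r y z ∧ y ≠ z → dist x y ≤ dist x z)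
    (hrad2 : ∀ x y z, r x y ∧ x ≠ y → ¬ r z y → dist y z ≤ dist x z) :
    IsClosed {p : X × X | r p.1 p.2} :=
  radial_partialOrder_isClosed_general r hrefl hrad1 hrad2
end

section
/- Let (X, d, ≽) be a radial partially ordered metric space and S a nonempty compact subset of X. Then there exists a ≽-increasing 1-Lipschitz function G : X → ℝ with ‖G‖∞ ≤ diam(S) such that G(x) > G(y) for every x,y ∈ S with x ≻ y. -/
/-!
For `z ∈ X` let `φ_z(x) = min (d(x, {w | z ≽ w})) (diam S)`. Radiality makes each `φ_z`
`≽`-increasing, and it is `1`-Lipschitz with values in `[0, diam S]`. If `x ≻ y` and `z` lies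
within `d(x, y)/2` of `y`, then radiality also forbids `z ≽ x`, which puts `x` at distance
`≥ d(x, z) > d(x, y)/2` from the lower set of `z`, while `φ_z(y) ≤ d(y, z) < d(x, y)/2`.
So the average `G = ∑ 2^{-(n+1)} φ_{z_n}` over a dense sequence `(z_n)` of the separable set `S`
separates every such pair in `S`.
-/

open Metric Set

section WeightedSum

variable {X : Type*} {w : ℕ → ℝ} {g : ℕ → X → ℝ} {D : ℝ}

theorem summable_weighted (hw0 : ∀ n, 0 ≤ w n) (hw : Summable w)
    (hg : ∀ n x, g n x ∈ Icc 0 D) (x : X) : Summable fun n => w n * g n x :=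
  .of_nonneg_of_le (fun n => mul_nonneg (hw0 n) (hg n x).1)
    (fun n => mul_le_mul_of_nonneg_left (hg n x).2 (hw0 n)) (hw.mul_right D)

theorem tsum_weighted_mem_Icc (hw0 : ∀ n, 0 ≤ w n) (hw : HasSum w 1)
    (hg : ∀ n x, g n x ∈ Icc 0 D) (x : X) : ∑' n, w n * g n x ∈ Icc 0 D := by
  refine ⟨tsum_nonneg fun n => mul_nonneg (hw0 n) (hg n x).1, ?_⟩
  calc ∑' n, w n * g n x ≤ ∑' n, w n * D :=
        (summable_weighted hw0 hw.summable hg x).tsum_le_tsum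
          (fun n => mul_le_mul_of_nonneg_left (hg n x).2 (hw0 n)) (hw.summable.mul_right D)
    _ = D := by rw [tsum_mul_right, hw.tsum_eq, one_mul]

theorem tsum_weighted_le_tsum_weighted (hw0 : ∀ n, 0 ≤ w n) (hw : Summable w)
    (hg : ∀ n x, g n x ∈ Icc 0 D) {x y : X} (h : ∀ n, g n y ≤ g n x) :
    ∑' n, w n * g n y ≤ ∑' n, w n * g n x :=
  (summable_weighted hw0 hw hg y).tsum_le_tsum (fun n => mul_le_mul_of_nonneg_left (h n) (hw0 n))
    (summable_weighted hw0 hw hg x)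

theorem tsum_weighted_lt_tsum_weighted (hw0 : ∀ n, 0 < w n) (hw : Summable w)
    (hg : ∀ n x, g n x ∈ Icc 0 D) {x y : X} (h : ∀ n, g n y ≤ g n x) {n : ℕ}
    (hn : g n y < g n x) : ∑' n, w n * g n y < ∑' n, w n * g n x :=
  (summable_weighted (fun n => (hw0 n).le) hw hg y).tsum_lt_tsum
    (fun n => mul_le_mul_of_nonneg_left (h n) (hw0 n).le) (mul_lt_mul_of_pos_left hn (hw0 n))
    (summable_weighted (fun n => (hw0 n).le) hw hg x)

theorem tsum_weighted_sub_le [PseudoMetricSpace X] (hw0 : ∀ n, 0 ≤ w n) (hw : HasSum w 1)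
    (hg : ∀ n x, g n x ∈ Icc 0 D) (hlip : ∀ n, LipschitzWith 1 (g n)) (x y : X) :
    ∑' n, w n * g n x - ∑' n, w n * g n y ≤ dist x y := by
  have hgxy : ∀ n, w n * g n x ≤ w n * g n y + w n * dist x y := fun n => by
    rw [← mul_add]
    exact mul_le_mul_of_nonneg_left (by simpa using (hlip n).le_add_mul x y) (hw0 n)
  have hsum := (summable_weighted hw0 hw.summable hg x).tsum_le_tsum hgxy
    ((summable_weighted hw0 hw.summable hg y).add (hw.summable.mul_right _))
  rw [Summable.tsum_add (summable_weighted hw0 hw.summable hg y) (hw.summable.mul_right _),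
    tsum_mul_right, hw.tsum_eq, one_mul] at hsum
  linarith

theorem abs_tsum_weighted_sub_le [PseudoMetricSpace X] (hw0 : ∀ n, 0 ≤ w n) (hw : HasSum w 1)
    (hg : ∀ n x, g n x ∈ Icc 0 D) (hlip : ∀ n, LipschitzWith 1 (g n)) (x y : X) :
    |∑' n, w n * g n x - ∑' n, w n * g n y| ≤ dist x y :=
  abs_sub_le_iff.2 ⟨tsum_weighted_sub_le hw0 hw hg hlip x y,
    dist_comm x y ▸ tsum_weighted_sub_le hw0 hw hg hlip y x⟩

end WeightedSum

section Radial

variable {X : Type*} [MetricSpace X] {r : X → X → Prop} {D : ℝ} {x y z : X}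

theorem infDist_le_infDist_of_rel
    (hrad2 : ∀ x y z, r x y ∧ x ≠ y → ¬ r z y → dist y z ≤ dist x z)
    {s : Set X} (hs : s.Nonempty) (hs_lower : ∀ w ∈ s, ∀ y, r w y → y ∈ s) (hxy : r x y) :
    infDist y s ≤ infDist x s := by
  refine (le_infDist hs).2 fun w hw => ?_
  by_cases hwy : r w y
  · rw [infDist_zero_of_mem (hs_lower w hw y hwy)]
    exact dist_nonneg
  rcases eq_or_ne x y with rfl | hne
  · exact infDist_le_dist_of_mem hw
  · exact (infDist_le_dist_of_mem hw).trans (hrad2 x y w ⟨hxy, hne⟩ hwy)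

theorem dist_le_infDist_setOf_rel (hrefl : ∀ x, r x x)
    (hrad1 : ∀ x y z, ¬ r y x → r y z ∧ y ≠ z → dist x y ≤ dist x z) (hzx : ¬ r z x) :
    dist x z ≤ infDist x {w | r z w} := by
  refine (le_infDist ⟨z, hrefl z⟩).2 fun w hw => ?_
  rcases eq_or_ne z w with rfl | hne
  · exact le_rfl
  · exact hrad1 x z w hzx ⟨hw, hne⟩

noncomputable def lowerDist (r : X → X → Prop) (D : ℝ) (z x : X) : ℝ :=
  min (infDist x {w | r z w}) D

theorem lowerDist_mem_Icc (hD : 0 ≤ D) : lowerDist r D z x ∈ Icc 0 D :=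
  ⟨le_min infDist_nonneg hD, min_le_right _ _⟩

theorem lipschitzWith_lowerDist : LipschitzWith 1 (lowerDist r D z) :=
  lipschitz_infDist_pt _ |>.min_const D

theorem lowerDist_le_dist (hrefl : ∀ x, r x x) : lowerDist r D z x ≤ dist x z :=
  (min_le_left _ _).trans (infDist_le_dist_of_mem (hrefl z))

theorem lowerDist_le_lowerDist_of_rel (hrefl : ∀ x, r x x)
    (htrans : ∀ x y z, r x y → r y z → r x z)
    (hrad2 : ∀ x y z, r x y ∧ x ≠ y → ¬ r z y → dist y z ≤ dist x z) (hxy : r x y) :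
    lowerDist r D z y ≤ lowerDist r D z x :=
  min_le_min_right D <| infDist_le_infDist_of_rel hrad2 ⟨z, hrefl z⟩
    (fun _ hw y hwy => htrans z _ y hw hwy) hxy

theorem lowerDist_lt_lowerDist (hrefl : ∀ x, r x x)
    (hantisymm : ∀ x y, r x y → r y x → x = y)
    (hrad1 : ∀ x y z, ¬ r y x → r y z ∧ y ≠ z → dist x y ≤ dist x z)
    (hrad2 : ∀ x y z, r x y ∧ x ≠ y → ¬ r z y → dist y z ≤ dist x z)
    (hxy : r x y) (hne : x ≠ y) (hD : dist x y ≤ D) (hyz : dist y z < dist x y / 2) :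
    lowerDist r D z y < lowerDist r D z x := by
  have hyx : ¬ r y x := fun h => hne (hantisymm x y hxy h)
  have hpos : 0 < dist x y := dist_pos.2 hne
  -- radiality: `z ≽ x` would force `d(x, y) ≤ d(z, y)`
  have hzx : ¬ r z x := by
    intro h
    rcases eq_or_ne z x with rfl | hzx
    · linarith [dist_comm y z]
    · linarith [hrad2 z x y ⟨h, hzx⟩ hyx, dist_comm y z]
  have hxz : dist x y / 2 < infDist x {w | r z w} := by
    linarith [dist_le_infDist_setOf_rel hrefl hrad1 hzx, dist_triangle x z y, dist_comm y z]
  calc lowerDist r D z y ≤ dist y z := lowerDist_le_dist hrefl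
    _ < dist x y / 2 := hyz
    _ < lowerDist r D z x := lt_min hxz (by linarith)

end Radial

/-- **Lemma 7.** Given a radial partially ordered metric space and a nonempty
compact `S ⊆ X`, there is an `≽`-increasing `1`-Lipschitz `G : X → ℝ` with
`‖G‖∞ ≤ diam S` which is strictly increasing on `S`. Here `r x y` means
`x ≽ y`. -/
theorem exists_strictly_increasing_on_compact {X : Type*} [MetricSpace X]
    (r : X → X → Prop)
    (hrefl : ∀ x, r x x)
    (htrans : ∀ x y z, r x y → r y z → r x z)
    (hantisymm : ∀ x y, r x y → r y x → x = y)
    (hrad1 : ∀ x y z, ¬ r y x → r y z ∧ y ≠ z → dist x y ≤ dist x z)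
    (hrad2 : ∀ x y z, r x y ∧ x ≠ y → ¬ r z y → dist y z ≤ dist x z)
    (S : Set X) (hS : S.Nonempty) (hScomp : IsCompact S) :
    ∃ G : X → ℝ,
      (∀ x y, r x y → G y ≤ G x) ∧
      (∀ x y, |G x - G y| ≤ dist x y) ∧
      (∀ x, |G x| ≤ Metric.diam S) ∧
      ∀ x ∈ S, ∀ y ∈ S, r x y ∧ x ≠ y → G y < G x := by
  have := hScomp.isSeparable.separableSpace
  have := hS.to_subtype
  obtain ⟨u, hu⟩ := TopologicalSpace.exists_dense_seq S
  set w : ℕ → ℝ := fun n => 1 / 2 / 2 ^ n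
  have hw0 : ∀ n, 0 < w n := fun n => by positivity
  have hw : HasSum w 1 := hasSum_geometric_two' 1
  set g : ℕ → X → ℝ := fun n => lowerDist r (diam S) (u n)
  have hg : ∀ n x, g n x ∈ Icc 0 (diam S) := fun n x => lowerDist_mem_Icc diam_nonneg
  have hmono : ∀ x y, r x y → ∀ n, g n y ≤ g n x := fun x y hxy n =>
    lowerDist_le_lowerDist_of_rel hrefl htrans hrad2 hxy
  refine ⟨fun x => ∑' n, w n * g n x,
    fun x y hxy => tsum_weighted_le_tsum_weighted (fun n => (hw0 n).le) hw.summable hg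
      (hmono x y hxy),
    abs_tsum_weighted_sub_le (fun n => (hw0 n).le) hw hg fun n => lipschitzWith_lowerDist,
    fun x => ?_, fun x hx y hy ⟨hxy, hne⟩ => ?_⟩
  · have hG := tsum_weighted_mem_Icc (fun n => (hw0 n).le) hw hg x
    exact (abs_of_nonneg hG.1).le.trans hG.2
  · obtain ⟨n, hn⟩ := denseRange_iff.1 hu ⟨y, hy⟩ (dist x y / 2) (half_pos (dist_pos.2 hne))
    exact tsum_weighted_lt_tsum_weighted hw0 hw.summable hg (hmono x y hxy) <|
      lowerDist_lt_lowerDist hrefl hantisymm hrad1 hrad2 hxy hne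
        (dist_le_diam_of_mem hScomp.isBounded hx hy) hn
end

section
/- Let ≿ be a total preorder on a compact metric space X = (X,d) such that ≿ is a closed subset of X × X. Then there exists a continuous function u : X → ℝ such that for all x,y ∈ X, x ≿ y if and only if u(x) ≥ u(y). -/
/-!
Write `x ≤ y` for `y ≿ x`. For `a < b`, Urysohn's construction run with lower open sets only
gives a continuous monotone `g : X → [0, 1]` with `g a = 0` and `g b = 1`. The interpolation
step works by compactness and totality: between a closed `c` and a lower open `u ⊇ c` fits
`Iio z` for a point `z` strictly between `max c` and `min uᶜ`, or, if there is none, the clopen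
set `Iio (min uᶜ)`. As `C(X, ℝ)` is second countable, countably many such functions `gₙ`
separate all strict pairs, and `∑ 2⁻ⁿ gₙ` is a utility.
-/

open Set

section TotalPreorder

variable {X : Type*} [Preorder X] [@Std.Total X (· ≤ ·)]

theorem lt_of_not_ge_of_total {a b : X} (h : ¬b ≤ a) : a < b :=
  lt_of_le_not_ge ((total_of (· ≤ ·) a b).resolve_right h) h

theorem compl_Ici_of_total (a : X) : (Ici a)ᶜ = Iio a :=
  ext fun _ => ⟨lt_of_not_ge_of_total, not_le_of_gt⟩

variable [TopologicalSpace X]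

theorem isOpen_Iio_of_total [ClosedIciTopology X] (a : X) : IsOpen (Iio a) :=
  compl_Ici_of_total a ▸ isClosed_Ici.isOpen_compl

theorem IsCompact.exists_isLeast_of_total [ClosedIicTopology X] {s : Set X} (hs : IsCompact s)
    (hne : s.Nonempty) : ∃ x, IsLeast s x := by
  have : Nonempty s := hne.to_subtype
  suffices (s ∩ ⋂ x : s, Iic (x : X)).Nonempty from
    let ⟨x, hxs, hx⟩ := this; ⟨x, hxs, fun y hy => mem_iInter.mp hx ⟨y, hy⟩⟩
  by_contra! H
  obtain ⟨x, hx⟩ := hs.elim_directed_family_closed (fun x : s => Iic (x : X))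
    (fun _ => isClosed_Iic) H fun x y => (total_of (· ≤ ·) (x : X) y).elim
      (fun h => ⟨x, subset_rfl, Iic_subset_Iic.2 h⟩) fun h => ⟨y, Iic_subset_Iic.2 h, subset_rfl⟩
  exact hx.subset ⟨x.2, le_rfl⟩

theorem IsCompact.exists_isGreatest_of_total [ClosedIciTopology X] {s : Set X}
    (hs : IsCompact s) (hne : s.Nonempty) : ∃ x, IsGreatest s x :=
  IsCompact.exists_isLeast_of_total (X := Xᵒᵈ) hs hne

theorem exists_isOpen_isLowerSet_closure_subset_Iio [ClosedIicTopology X] [ClosedIciTopology X]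
    {a b : X} (hab : a < b) :
    ∃ v, IsOpen v ∧ IsLowerSet v ∧ Iic a ⊆ v ∧ closure v ⊆ Iio b := by
  by_cases hgap : ∃ z, a < z ∧ z < b
  · obtain ⟨z, haz, hzb⟩ := hgap
    exact ⟨Iio z, isOpen_Iio_of_total z, isLowerSet_Iio z, Iic_subset_Iio.2 haz,
      (closure_minimal Iio_subset_Iic_self isClosed_Iic).trans (Iic_subset_Iio.2 hzb)⟩
  · -- with nothing strictly between `a` and `b`, the open set `Iio b` equals the closed `Iic a`
    have hIio : Iio b ⊆ Iic a := fun x hxb => by_contra fun hxa =>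
      hgap ⟨x, lt_of_not_ge_of_total hxa, hxb⟩
    refine ⟨Iio b, isOpen_Iio_of_total b, isLowerSet_Iio b, Iic_subset_Iio.2 hab, ?_⟩
    exact (closure_minimal hIio isClosed_Iic).trans (Iic_subset_Iio.2 hab)

theorem exists_isOpen_isLowerSet_between [CompactSpace X] [ClosedIicTopology X]
    [ClosedIciTopology X] {c u : Set X}
    (hc : IsClosed c) (hu : IsLowerSet u) (hu_open : IsOpen u) (hcu : c ⊆ u) :
    ∃ v, IsOpen v ∧ c ⊆ v ∧ closure v ⊆ u ∧ IsLowerSet v := by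
  rcases c.eq_empty_or_nonempty with rfl | hc_ne
  · exact ⟨∅, isOpen_empty, subset_rfl, closure_empty.trans_subset (empty_subset u),
      isLowerSet_empty⟩
  rcases uᶜ.eq_empty_or_nonempty with hu_univ | hu_ne
  · exact ⟨univ, isOpen_univ, subset_univ c, (compl_empty_iff.1 hu_univ).symm ▸ subset_univ _,
      isLowerSet_univ⟩
  obtain ⟨a, hac, ha⟩ := hc.isCompact.exists_isGreatest_of_total hc_ne
  obtain ⟨b, hbu, hb⟩ := hu_open.isClosed_compl.isCompact.exists_isLeast_of_total hu_ne
  have hab : a < b := lt_of_not_ge_of_total fun hba => hbu (hu hba (hcu hac))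
  have hIio : Iio b ⊆ u := fun x hxb => by_contra fun hxu => hxb.not_ge (hb hxu)
  obtain ⟨v, hv_open, hv, hav, hvb⟩ := exists_isOpen_isLowerSet_closure_subset_Iio hab
  exact ⟨v, hv_open, fun x hx => hav (ha hx), hvb.trans hIio, hv⟩

end TotalPreorder

namespace Urysohns.CU

variable {X : Type*} [TopologicalSpace X] [Preorder X]

theorem monotone_approx (c : CU fun _ u : Set X => IsLowerSet u) (n : ℕ) :
    Monotone (c.approx n) := by
  induction n generalizing c with
  | zero =>
    intro x y hxy
    show c.Uᶜ.indicator 1 x ≤ c.Uᶜ.indicator 1 y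
    exact indicator_apply_le' (fun hx => (indicator_of_mem (c.P_C_U.compl hxy hx) (1 : X → ℝ)).ge)
      fun _ => indicator_nonneg (fun _ _ => zero_le_one) y
  | succ n ih =>
    intro x y hxy
    exact midpoint_le_midpoint (ih c.left hxy) (ih c.right hxy)

theorem monotone_lim (c : CU fun _ u : Set X => IsLowerSet u) : Monotone c.lim :=
  fun _ y hxy => ciSup_mono (c.bddAbove_range_approx y) fun n => c.monotone_approx n hxy

end Urysohns.CU

section Utility

variable {X : Type*} [TopologicalSpace X] [Preorder X] [@Std.Total X (· ≤ ·)]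

theorem exists_continuous_le_iff_of_separating (g : ℕ → C(X, ℝ)) (hg_mono : ∀ n, Monotone (g n))
    (hg_Icc : ∀ n x, g n x ∈ Icc (0 : ℝ) 1) (hg_sep : ∀ x y, x < y → ∃ n, g n x < g n y) :
    ∃ u : X → ℝ, Continuous u ∧ ∀ x y, x ≤ y ↔ u x ≤ u y := by
  have hbound : ∀ n x, ‖(1 / 2 : ℝ) ^ n * g n x‖ ≤ (1 / 2) ^ n := fun n x => by
    rw [norm_mul, norm_pow, Real.norm_of_nonneg (hg_Icc n x).1, norm_div, norm_one,
      Real.norm_ofNat]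
    exact mul_le_of_le_one_right (by positivity) (hg_Icc n x).2
  have hsum : ∀ x, Summable fun n => (1 / 2 : ℝ) ^ n * g n x := fun x =>
    summable_geometric_two.of_norm_bounded (hbound · x)
  have hterm_mono : ∀ n, Monotone fun x => (1 / 2 : ℝ) ^ n * g n x := fun n =>
    (hg_mono n).const_mul (by positivity)
  refine ⟨fun x => ∑' n, (1 / 2 : ℝ) ^ n * g n x,
    continuous_tsum (fun n => continuous_const.mul (g n).continuous) summable_geometric_two hbound,
    fun x y => ⟨fun hxy => (hsum x).tsum_le_tsum (hterm_mono · hxy) (hsum y), fun hu => ?_⟩⟩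
  by_contra hxy
  have hyx : y < x := lt_of_not_ge_of_total hxy
  obtain ⟨n, hn⟩ := hg_sep y x hyx
  refine hu.not_gt (Summable.tsum_lt_tsum_of_nonneg (i := n) ?_ (hterm_mono · hyx.le) ?_ (hsum x))
  · exact fun k => mul_nonneg (by positivity) (hg_Icc k y).1
  · exact mul_lt_mul_of_pos_left hn (by positivity)

variable [CompactSpace X] [OrderClosedTopology X]

theorem exists_continuous_monotone_zero_one {a b : X} (hab : a < b) :
    ∃ g : C(X, ℝ), Monotone g ∧ (∀ x, g x ∈ Icc (0 : ℝ) 1) ∧ g a = 0 ∧ g b = 1 := by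
  let c : Urysohns.CU fun _ u : Set X => IsLowerSet u :=
    { C := Iic a
      U := Iio b
      P_C_U := isLowerSet_Iio b
      closed_C := isClosed_Iic
      open_U := isOpen_Iio_of_total b
      subset := Iic_subset_Iio.2 hab
      hP := fun hc hu hu_open hcu =>
        let ⟨v, hv_open, hcv, hvu, hv⟩ := exists_isOpen_isLowerSet_between hc hu hu_open hcu
        ⟨v, hv_open, hcv, hvu, hv, hu⟩ }
  exact ⟨⟨c.lim, c.continuous_lim⟩, c.monotone_lim, c.lim_mem_Icc, c.lim_of_mem_C a le_rfl,
    c.lim_of_notMem_U b (lt_irrefl b)⟩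

theorem exists_seq_monotone_separating [LocallyCompactSpace X] [SecondCountableTopology X] :
    ∃ g : ℕ → C(X, ℝ), (∀ n, Monotone (g n)) ∧ (∀ n x, g n x ∈ Icc (0 : ℝ) 1) ∧
      ∀ x y, x < y → ∃ n, g n x < g n y := by
  let F := {g : C(X, ℝ) | Monotone g ∧ ∀ x, g x ∈ Icc (0 : ℝ) 1}
  have : Nonempty F := ⟨⟨0, fun _ _ _ => le_rfl, fun _ => ⟨le_rfl, zero_le_one⟩⟩⟩
  obtain ⟨g, hg⟩ := TopologicalSpace.exists_dense_seq F
  refine ⟨fun n => g n, fun n => (g n).2.1, fun n => (g n).2.2, fun x y hxy => ?_⟩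
  obtain ⟨f, hf_mono, hf_Icc, hfx, hfy⟩ := exists_continuous_monotone_zero_one hxy
  have hopen : IsOpen {f : F | (f : C(X, ℝ)) x < (f : C(X, ℝ)) y} :=
    isOpen_lt ((continuous_eval_const x).comp continuous_subtype_val)
      ((continuous_eval_const y).comp continuous_subtype_val)
  exact hg.exists_mem_open hopen ⟨⟨f, hf_mono, hf_Icc⟩, by simp [hfx, hfy]⟩

theorem exists_continuous_le_iff [LocallyCompactSpace X] [SecondCountableTopology X] :
    ∃ u : X → ℝ, Continuous u ∧ ∀ x y, x ≤ y ↔ u x ≤ u y :=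
  let ⟨g, hg_mono, hg_Icc, hg_sep⟩ := exists_seq_monotone_separating (X := X)
  exists_continuous_le_iff_of_separating g hg_mono hg_Icc hg_sep

end Utility

/-- **Corollary 10.** Every closed total preorder `≿` on a compact metric
space admits a continuous utility representation. Here `r x y` means
`x ≿ y`. -/
theorem exists_continuous_utility_of_closed_total_preorder
    {X : Type*} [MetricSpace X] [CompactSpace X] (r : X → X → Prop)
    (hrefl : ∀ x, r x x)
    (htrans : ∀ x y z, r x y → r y z → r x z)
    (htotal : ∀ x y, r x y ∨ r y x)
    (hclosed : IsClosed {p : X × X | r p.1 p.2}) :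
    ∃ u : X → ℝ, Continuous u ∧ ∀ x y, r x y ↔ u y ≤ u x := by
  let _ : Preorder X :=
    { le := fun x y => r y x
      le_refl := hrefl
      le_trans := fun x y z hxy hyz => htrans z y x hyz hxy }
  have : @Std.Total X (· ≤ ·) := ⟨fun x y => htotal y x⟩
  have : OrderClosedTopology X := ⟨hclosed.preimage continuous_swap⟩
  obtain ⟨u, hu, hle⟩ := exists_continuous_le_iff (X := X)
  exact ⟨u, hu, fun x y => hle y x⟩
end

section
/- Let X = (X,d) be a metric space and f : X → ℝ a uniformly continuous function. Then f is Lipschitz for large distances if and only if there exist nonnegative real numbers a and b such that ω_f(t) ≤ a·t + b for every t ≥ 0, where ω_f is the modulus of continuity of f. -/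
/-!
Both sides amount to the coarse Lipschitz bound `|f x - f y| ≤ a * d(x, y) + b`. Uniform
continuity gives a scale `δ` below which `f` oscillates by at most `1`, and the large-distance
constant at `δ` handles the rest; conversely, at distances `≥ δ` the additive constant `b` is
absorbed as `b ≤ (b / δ) * d(x, y)`.
-/

open scoped ENNReal

section

variable {X : Type*} [PseudoMetricSpace X]

def LipschitzForLargeDistances (f : X → ℝ) : Prop :=
  ∀ δ : ℝ, 0 < δ → ∃ K : ℝ, 0 < K ∧ ∀ x y : X, δ ≤ dist x y → |f x - f y| ≤ K * dist x y

/-- Valued in `ℝ≥0∞`, so that an unbounded oscillation gives `⊤` rather than a junk real `sSup`. -/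
noncomputable def modulusOfContinuity (f : X → ℝ) (t : ℝ) : ℝ≥0∞ :=
  sSup {c : ℝ≥0∞ | ∃ x y : X, dist x y ≤ t ∧ c = ENNReal.ofReal |f x - f y|}

theorem modulusOfContinuity_le_ofReal_iff {f : X → ℝ} {t c : ℝ} (hc : 0 ≤ c) :
    modulusOfContinuity f t ≤ ENNReal.ofReal c ↔ ∀ x y : X, dist x y ≤ t → |f x - f y| ≤ c := by
  simp only [modulusOfContinuity, sSup_le_iff, Set.mem_ofPred_eq]
  constructor
  · intro h x y hxy
    exact (ENNReal.ofReal_le_ofReal_iff hc).1 (h _ ⟨x, y, hxy, rfl⟩)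
  · rintro h _ ⟨x, y, hxy, rfl⟩
    exact ENNReal.ofReal_le_ofReal (h x y hxy)

theorem exists_affine_majorant_modulusOfContinuity_iff (f : X → ℝ) :
    (∃ a b : ℝ, 0 ≤ a ∧ 0 ≤ b ∧ ∀ t : ℝ, 0 ≤ t →
      modulusOfContinuity f t ≤ ENNReal.ofReal (a * t + b)) ↔
    ∃ a b : ℝ, 0 ≤ a ∧ 0 ≤ b ∧ ∀ x y : X, |f x - f y| ≤ a * dist x y + b := by
  refine exists₂_congr fun a b => and_congr_right fun ha => and_congr_right fun hb => ?_
  constructor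
  · intro h x y
    exact (modulusOfContinuity_le_ofReal_iff (by positivity)).1
      (h _ dist_nonneg) x y le_rfl
  · intro h t ht
    refine (modulusOfContinuity_le_ofReal_iff (by positivity)).2 fun x y hxy => ?_
    calc |f x - f y| ≤ a * dist x y + b := h x y
      _ ≤ a * t + b := by gcongr

theorem LipschitzForLargeDistances.abs_sub_le_mul_dist_add_one {f : X → ℝ}
    (hL : LipschitzForLargeDistances f) (hf : UniformContinuous f) :
    ∃ K : ℝ, 0 ≤ K ∧ ∀ x y : X, |f x - f y| ≤ K * dist x y + 1 := by
  obtain ⟨δ, hδ, hsmall⟩ := Metric.uniformContinuous_iff.1 hf 1 one_pos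
  obtain ⟨K, hK, hlarge⟩ := hL δ hδ
  refine ⟨K, hK.le, fun x y => ?_⟩
  have hKd : 0 ≤ K * dist x y := by positivity
  rcases lt_or_ge (dist x y) δ with hxy | hxy
  · have := hsmall hxy
    rw [Real.dist_eq] at this
    linarith
  · linarith [hlarge x y hxy]

theorem lipschitzForLargeDistances_of_abs_sub_le {f : X → ℝ} {a b : ℝ} (ha : 0 ≤ a) (hb : 0 ≤ b)
    (h : ∀ x y : X, |f x - f y| ≤ a * dist x y + b) : LipschitzForLargeDistances f := by
  intro δ hδ
  refine ⟨a + b / δ + 1, by positivity, fun x y hxy => ?_⟩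
  have hb' : b ≤ b / δ * dist x y := by
    rw [div_mul_eq_mul_div, le_div_iff₀ hδ]
    exact mul_le_mul_of_nonneg_left hxy hb
  calc |f x - f y| ≤ a * dist x y + b := h x y
    _ ≤ (a + b / δ + 1) * dist x y := by nlinarith [dist_nonneg (x := x) (y := y)]

end

/-- **Lemma 12.** A uniformly continuous real-valued function on a metric
space is Lipschitz for large distances if and only if its modulus of
continuity `ω_f : [0,∞) → [0,∞]` admits an affine majorant `t ↦ a·t + b` with
`a, b ≥ 0`. The modulus of continuity at `t` is formalized as the supremum in
`ℝ≥0∞` of the values `|f x - f y|` over pairs with `dist x y ≤ t`. -/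
theorem lipschitzForLargeDistances_iff_affine_majorant_of_modulus
    {X : Type*} [MetricSpace X] (f : X → ℝ) (hf : UniformContinuous f) :
    (∀ δ : ℝ, 0 < δ → ∃ K : ℝ, 0 < K ∧
      ∀ x y : X, δ ≤ dist x y → |f x - f y| ≤ K * dist x y) ↔
    ∃ a b : ℝ, 0 ≤ a ∧ 0 ≤ b ∧ ∀ t : ℝ, 0 ≤ t →
      sSup {c : ENNReal | ∃ x y : X, dist x y ≤ t ∧
          c = ENNReal.ofReal |f x - f y|} ≤ ENNReal.ofReal (a * t + b) := by
  change LipschitzForLargeDistances f ↔ ∃ a b : ℝ, 0 ≤ a ∧ 0 ≤ b ∧ ∀ t : ℝ, 0 ≤ t →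
    modulusOfContinuity f t ≤ ENNReal.ofReal (a * t + b)
  rw [exists_affine_majorant_modulusOfContinuity_iff]
  constructor
  · intro hL
    obtain ⟨K, hK, hfK⟩ := hL.abs_sub_le_mul_dist_add_one hf
    exact ⟨K, 1, hK, zero_le_one, hfK⟩
  · rintro ⟨a, b, ha, hb, h⟩
    exact lipschitzForLargeDistances_of_abs_sub_le ha hb h
end

section
/- Let (X, d, ≽) be a radial partially ordered metric space and S a nonempty subset of X. Then every ≽-increasing, bounded, uniformly continuous function f : S → ℝ extends to a ≽-increasing, uniformly continuous function F : X → ℝ with F restricted to S equal to f. -/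
/-!
A bounded uniformly continuous `f` on `S` has a subadditive modulus of continuity `ω`: the
infimum of the affine majorants `t ↦ a t + b` (`a, b ≥ 0`) of its oscillation, which is
concave and tends to `0` at `0` because uniform continuity plus boundedness allows arbitrarily
small `b`. The extension is
`F x = inf_{s ∈ S} (if s ≽ x then f s else f s + ω (d x s))`.
Radiality (ii) makes every term, hence `F`, increasing, and radiality (i) together with the
triangle inequality and subadditivity of `ω` gives `|F x - F y| ≤ ω (d x y)`.
-/

open Filter Topology Bornology Metric
open scoped NNReal Uniformity

noncomputable section

section AffineEnvelope

variable {P : Set (ℝ≥0 × ℝ≥0)}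

def affineEnvelope (P : Set (ℝ≥0 × ℝ≥0)) (t : ℝ≥0) : ℝ≥0 :=
  ⨅ p : P, p.1.1 * t + p.1.2

theorem affineEnvelope_le {p : ℝ≥0 × ℝ≥0} (hp : p ∈ P) (t : ℝ≥0) :
    affineEnvelope P t ≤ p.1 * t + p.2 :=
  ciInf_le' (fun p : P ↦ p.1.1 * t + p.1.2) ⟨p, hp⟩

theorem le_affineEnvelope (hP : P.Nonempty) {t c : ℝ≥0} (h : ∀ p ∈ P, c ≤ p.1 * t + p.2) :
    c ≤ affineEnvelope P t :=
  have := hP.to_subtype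
  le_ciInf fun p ↦ h p p.2

theorem affineEnvelope_mono (hP : P.Nonempty) : Monotone (affineEnvelope P) :=
  fun s t hst ↦ le_affineEnvelope hP fun p hp ↦
    (affineEnvelope_le hp s).trans (by gcongr)

theorem mul_affineEnvelope_le (hP : P.Nonempty) {c : ℝ≥0} (hc : c ≤ 1) (t : ℝ≥0) :
    c * affineEnvelope P t ≤ affineEnvelope P (c * t) :=
  le_affineEnvelope hP fun p hp ↦ calc
    c * affineEnvelope P t ≤ c * (p.1 * t + p.2) := by gcongr; exact affineEnvelope_le hp t
    _ = p.1 * (c * t) + c * p.2 := by ring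
    _ ≤ p.1 * (c * t) + p.2 := by gcongr; exact mul_le_of_le_one_left zero_le hc

theorem affineEnvelope_add_le (hP : P.Nonempty) (s t : ℝ≥0) :
    affineEnvelope P (s + t) ≤ affineEnvelope P s + affineEnvelope P t := by
  rcases eq_zero_or_pos (s + t) with hst | hst
  · obtain ⟨rfl, rfl⟩ := add_eq_zero.1 hst
    simp
  set w := affineEnvelope P (s + t)
  calc w = s / (s + t) * w + t / (s + t) * w := by
        rw [← add_mul, ← add_div, div_self hst.ne', one_mul]
    _ ≤ affineEnvelope P (s / (s + t) * (s + t)) + affineEnvelope P (t / (s + t) * (s + t)) := by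
        gcongr <;> apply mul_affineEnvelope_le hP <;> apply div_le_one_of_le₀ <;> simp
    _ = affineEnvelope P s + affineEnvelope P t := by
        rw [div_mul_cancel₀ _ hst.ne', div_mul_cancel₀ _ hst.ne']

theorem tendsto_affineEnvelope_zero (h : ∀ ε > 0, ∃ p ∈ P, p.2 < ε) :
    Tendsto (affineEnvelope P) (𝓝 0) (𝓝 0) := by
  refine tendsto_order.2 ⟨fun _ ha ↦ (not_lt_zero ha).elim, fun ε hε ↦ ?_⟩
  obtain ⟨p, hp, hpε⟩ := h ε hε
  have hlim : Tendsto (fun t : ℝ≥0 ↦ p.1 * t + p.2) (𝓝 0) (𝓝 p.2) :=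
    Continuous.tendsto' (by fun_prop) 0 _ (by simp)
  filter_upwards [hlim.eventually (gt_mem_nhds hpε)] with t ht
  exact (affineEnvelope_le hp t).trans_lt ht

end AffineEnvelope

section Modulus

variable {X Y : Type*} [PseudoMetricSpace X] [PseudoMetricSpace Y]

def affineBounds (f : X → Y) (S : Set X) : Set (ℝ≥0 × ℝ≥0) :=
  {p | ∀ x ∈ S, ∀ y ∈ S, nndist (f x) (f y) ≤ p.1 * nndist x y + p.2}

theorem exists_mem_affineBounds_of_isBounded {f : X → Y} {S : Set X} (hf : IsBounded (f '' S)) :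
    ∃ D, (0, D) ∈ affineBounds f S := by
  obtain ⟨D, hD⟩ := isBounded_iff_nndist.1 hf
  refine ⟨D, fun x hx y hy ↦ ?_⟩
  simpa using hD (Set.mem_image_of_mem f hx) (Set.mem_image_of_mem f hy)

theorem exists_mem_affineBounds_lt {f : X → Y} {S : Set X} (hf : IsBounded (f '' S))
    (huc : UniformContinuousOn f S) {ε : ℝ≥0} (hε : 0 < ε) : ∃ a, (a, ε) ∈ affineBounds f S := by
  obtain ⟨D, hD⟩ := exists_mem_affineBounds_of_isBounded hf
  obtain ⟨δ, hδ, hδε⟩ := uniformContinuousOn_iff.1 huc ε hε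
  lift δ to ℝ≥0 using hδ.le
  refine ⟨D / δ, fun x hx y hy ↦ ?_⟩
  rcases lt_or_ge (nndist x y) δ with hxy | hxy
  · have hfxy := hδε x hx y hy (by rwa [← coe_nndist, NNReal.coe_lt_coe])
    rw [← coe_nndist, NNReal.coe_lt_coe] at hfxy
    exact hfxy.le.trans le_add_self
  · calc nndist (f x) (f y) ≤ D := by simpa using hD x hx y hy
      _ = D / δ * δ := (div_mul_cancel₀ D (NNReal.coe_pos.1 hδ).ne').symm
      _ ≤ D / δ * nndist x y + ε := le_add_right (by gcongr)

theorem exists_subadditive_modulus_of_uniformContinuousOn {f : X → Y} {S : Set X}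
    (hf : IsBounded (f '' S)) (huc : UniformContinuousOn f S) :
    ∃ ω : ℝ≥0 → ℝ≥0, Monotone ω ∧ (∀ s t, ω (s + t) ≤ ω s + ω t) ∧
      Tendsto ω (𝓝 0) (𝓝 0) ∧ ∀ x ∈ S, ∀ y ∈ S, nndist (f x) (f y) ≤ ω (nndist x y) := by
  obtain ⟨D, hD⟩ := exists_mem_affineBounds_of_isBounded hf
  have hP : (affineBounds f S).Nonempty := ⟨_, hD⟩
  refine ⟨affineEnvelope (affineBounds f S), affineEnvelope_mono hP, affineEnvelope_add_le hP,
    tendsto_affineEnvelope_zero fun ε hε ↦ ?_,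
    fun x hx y hy ↦ le_affineEnvelope hP fun p hp ↦ hp x hx y hy⟩
  obtain ⟨a, ha⟩ := exists_mem_affineBounds_lt hf huc (half_pos hε)
  exact ⟨_, ha, half_lt_self hε⟩

theorem uniformContinuous_of_dist_le {F : X → Y} {ω : ℝ≥0 → ℝ≥0} (hω : Tendsto ω (𝓝 0) (𝓝 0))
    (hF : ∀ x y, dist (F x) (F y) ≤ ω (nndist x y)) : UniformContinuous F := by
  have hdist : Tendsto (fun p : X × X ↦ nndist p.1 p.2) (𝓤 X) (𝓝 0) :=
    NNReal.tendsto_coe.1 (tendsto_uniformity_iff_dist_tendsto_zero.1 tendsto_id)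
  exact tendsto_uniformity_iff_dist_tendsto_zero.2 <| squeeze_zero (fun _ ↦ dist_nonneg)
    (fun p ↦ hF p.1 p.2) (NNReal.tendsto_coe.2 (hω.comp hdist))

end Modulus

section Extension

variable {X : Type*} [PseudoMetricSpace X] {r : X → X → Prop} {S : Set X} {f : X → ℝ}
  {ω : ℝ≥0 → ℝ≥0}

open Classical in
def extensionBound (r : X → X → Prop) (f : X → ℝ) (ω : ℝ≥0 → ℝ≥0) (x s : X) : ℝ :=
  if r s x then f s else f s + ω (nndist x s)

def monotoneExtension (r : X → X → Prop) (S : Set X) (f : X → ℝ) (ω : ℝ≥0 → ℝ≥0) (x : X) :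
    ℝ :=
  ⨅ s : S, extensionBound r f ω x s

theorem le_extensionBound (x s : X) : f s ≤ extensionBound r f ω x s := by
  unfold extensionBound
  split_ifs <;> simp

theorem monotoneExtension_le (hf : BddBelow (f '' S)) (x : X) {s : X} (hs : s ∈ S) :
    monotoneExtension r S f ω x ≤ extensionBound r f ω x s := by
  obtain ⟨m, hm⟩ := hf
  refine ciInf_le ⟨m, ?_⟩ (⟨s, hs⟩ : S)
  rintro _ ⟨s', rfl⟩
  exact (hm (Set.mem_image_of_mem f s'.2)).trans (le_extensionBound x s')

theorem le_monotoneExtension [Nonempty S] {x : X} {c : ℝ}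
    (h : ∀ s ∈ S, c ≤ extensionBound r f ω x s) : c ≤ monotoneExtension r S f ω x :=
  le_ciInf fun s ↦ h s s.2

theorem extensionBound_le_of_rel (htrans : ∀ x y z, r x y → r y z → r x z)
    (hrad2 : ∀ x y z, r x y ∧ x ≠ y → ¬ r z y → dist y z ≤ dist x z) (hω : Monotone ω)
    {x y : X} (hxy : r x y) (s : X) : extensionBound r f ω y s ≤ extensionBound r f ω x s := by
  rcases eq_or_ne x y with rfl | hne
  · exact le_rfl
  by_cases hsx : r s x
  · simp [extensionBound, hsx, htrans s x y hsx hxy]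
  by_cases hsy : r s y
  · simp [extensionBound, hsx, hsy]
  simp only [extensionBound, hsx, hsy, if_false, add_le_add_iff_left, NNReal.coe_le_coe]
  exact hω (hrad2 x y s ⟨hxy, hne⟩ hsy)

theorem extensionBound_le_add
    (hrad1 : ∀ x y z, ¬ r y x → r y z ∧ y ≠ z → dist x y ≤ dist x z) (hω : Monotone ω)
    (hω_add : ∀ s t, ω (s + t) ≤ ω s + ω t) (x x' s : X) :
    extensionBound r f ω x s ≤ extensionBound r f ω x' s + ω (nndist x x') := by
  by_cases hsx : r s x
  · simpa [extensionBound, hsx] using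
      le_add_of_le_of_nonneg (le_extensionBound x' s) (ω (nndist x x')).2
  by_cases hsx' : r s x'
  · simp only [extensionBound, hsx, hsx', if_true, if_false, add_le_add_iff_left,
      NNReal.coe_le_coe]
    rcases eq_or_ne s x' with rfl | hne
    · rw [nndist_comm]
    · exact hω (hrad1 x s x' hsx ⟨hsx', hne⟩)
  simp only [extensionBound, hsx, hsx', if_false]
  have : ω (nndist x s) ≤ ω (nndist x x') + ω (nndist x' s) :=
    (hω (nndist_triangle x x' s)).trans (hω_add _ _)
  have := NNReal.coe_le_coe.2 this
  push_cast at this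
  linarith

theorem monotoneExtension_eq_of_mem [Nonempty S] (hrefl : ∀ x, r x x)
    (hmono : ∀ x ∈ S, ∀ y ∈ S, r x y → f y ≤ f x)
    (hfω : ∀ x ∈ S, ∀ y ∈ S, nndist (f x) (f y) ≤ ω (nndist x y)) (hf : BddBelow (f '' S))
    {x : X} (hx : x ∈ S) : monotoneExtension r S f ω x = f x := by
  refine le_antisymm ?_ (le_monotoneExtension fun s hs ↦ ?_)
  · simpa [extensionBound, hrefl x] using monotoneExtension_le (r := r) (ω := ω) hf x hx
  by_cases hsx : r s x
  · simpa [extensionBound, hsx] using hmono s hs x hx hsx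
  have hdist : dist (f x) (f s) ≤ ω (nndist x s) := NNReal.coe_le_coe.2 (hfω x hx s hs)
  simp only [extensionBound, hsx, if_false]
  linarith [le_abs_self (f x - f s), Real.dist_eq (f x) (f s)]

theorem monotoneExtension_le_of_rel [Nonempty S] (htrans : ∀ x y z, r x y → r y z → r x z)
    (hrad2 : ∀ x y z, r x y ∧ x ≠ y → ¬ r z y → dist y z ≤ dist x z) (hω : Monotone ω)
    (hf : BddBelow (f '' S)) {x y : X} (hxy : r x y) :
    monotoneExtension r S f ω y ≤ monotoneExtension r S f ω x :=
  le_monotoneExtension fun s hs ↦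
    (monotoneExtension_le hf y hs).trans (extensionBound_le_of_rel htrans hrad2 hω hxy s)

theorem dist_monotoneExtension_le [Nonempty S]
    (hrad1 : ∀ x y z, ¬ r y x → r y z ∧ y ≠ z → dist x y ≤ dist x z) (hω : Monotone ω)
    (hω_add : ∀ s t, ω (s + t) ≤ ω s + ω t) (hf : BddBelow (f '' S)) (x y : X) :
    dist (monotoneExtension r S f ω x) (monotoneExtension r S f ω y) ≤ ω (nndist x y) := by
  have key : ∀ x y, monotoneExtension r S f ω x ≤ monotoneExtension r S f ω y + ω (nndist x y) :=
    fun x y ↦ sub_le_iff_le_add.1 <| le_monotoneExtension fun s hs ↦ sub_le_iff_le_add.2 <|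
      (monotoneExtension_le hf x hs).trans (extensionBound_le_add hrad1 hω hω_add x y s)
  rw [Real.dist_eq, abs_sub_le_iff]
  constructor
  · linarith [key x y]
  · linarith [nndist_comm x y ▸ key y x]

end Extension

theorem exists_monotone_uniformlyContinuous_extension_of_bounded_general
    {X : Type*} [MetricSpace X] (r : X → X → Prop)
    (hrefl : ∀ x, r x x)
    (htrans : ∀ x y z, r x y → r y z → r x z)
    (hrad1 : ∀ x y z, ¬ r y x → r y z ∧ y ≠ z → dist x y ≤ dist x z)
    (hrad2 : ∀ x y z, r x y ∧ x ≠ y → ¬ r z y → dist y z ≤ dist x z)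
    (S : Set X) (hS : S.Nonempty) (f : X → ℝ)
    (hmono : ∀ x ∈ S, ∀ y ∈ S, r x y → f y ≤ f x)
    (hbdd : ∃ C : ℝ, ∀ x ∈ S, |f x| ≤ C)
    (huc : UniformContinuousOn f S) :
    ∃ F : X → ℝ, (∀ x y, r x y → F y ≤ F x) ∧ UniformContinuous F ∧
      ∀ x ∈ S, F x = f x := by
  obtain ⟨C, hC⟩ := hbdd
  have hfS : IsBounded (f '' S) := isBounded_iff_forall_norm_le.2
    ⟨C, Set.forall_mem_image.2 fun x hx ↦ by simpa using hC x hx⟩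
  obtain ⟨ω, hω, hω_add, hω_zero, hfω⟩ :=
    exists_subadditive_modulus_of_uniformContinuousOn hfS huc
  have := hS.to_subtype
  exact ⟨monotoneExtension r S f ω,
    fun x y ↦ monotoneExtension_le_of_rel htrans hrad2 hω hfS.bddBelow,
    uniformContinuous_of_dist_le hω_zero (dist_monotoneExtension_le hrad1 hω hω_add hfS.bddBelow),
    fun x ↦ monotoneExtension_eq_of_mem hrefl hmono hfω hfS.bddBelow⟩

/-- **Corollary 14.** Let `(X, d, ≽)` be a radial metric poset and `S ⊆ X`
nonempty. Every `≽`-increasing, bounded, uniformly continuous `f : S → ℝ`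
extends to an `≽`-increasing uniformly continuous `F : X → ℝ`.
Here `r x y` means `x ≽ y`. -/
theorem exists_monotone_uniformlyContinuous_extension_of_bounded
    {X : Type*} [MetricSpace X] (r : X → X → Prop)
    (hrefl : ∀ x, r x x)
    (htrans : ∀ x y z, r x y → r y z → r x z)
    (hantisymm : ∀ x y, r x y → r y x → x = y)
    (hrad1 : ∀ x y z, ¬ r y x → r y z ∧ y ≠ z → dist x y ≤ dist x z)
    (hrad2 : ∀ x y z, r x y ∧ x ≠ y → ¬ r z y → dist y z ≤ dist x z)
    (S : Set X) (hS : S.Nonempty) (f : X → ℝ)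
    (hmono : ∀ x ∈ S, ∀ y ∈ S, r x y → f y ≤ f x)
    (hbdd : ∃ C : ℝ, ∀ x ∈ S, |f x| ≤ C)
    (huc : UniformContinuousOn f S) :
    ∃ F : X → ℝ, (∀ x y, r x y → F y ≤ F x) ∧ UniformContinuous F ∧
      ∀ x ∈ S, F x = f x :=
  exists_monotone_uniformlyContinuous_extension_of_bounded_general r hrefl htrans hrad1 hrad2 S hS f
    hmono hbdd huc
end
end
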